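/- arXiv:2512.00600 — 2 statements merged into one kernel-verified Lean document; each statement's English description precedes it below -/
import Mathlib

section
/- Let a₁, a₂, b₁, b₂, c, d ∈ 𝕆 with (a_ℓ + b_ℓ e₈)(c + d e₈) = 0 for ℓ = 1, 2. If c + d e₈ ≠ 0, then ⟨a₁, a₂⟩ = ⟨b₁, b₂⟩. -/
open scoped ENNReal
open Classical

noncomputable section

/-- One step of the Cayley–Dickson doubling construction:
elements `⟨a, b⟩` represent `a + b e`, with
`(a + b e)(c + d e) = (ac - (star d) b) + (d a + b (star c)) e` and
`star (a + b e) = star a - b e`. -/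
@[ext]
structure CD (A : Type) : Type where
  x : A
  y : A

namespace CD

variable {A : Type}

instance [Add A] : Add (CD A) := ⟨fun p q => ⟨p.x + q.x, p.y + q.y⟩⟩
instance [Zero A] : Zero (CD A) := ⟨⟨0, 0⟩⟩
instance [Neg A] : Neg (CD A) := ⟨fun p => ⟨-p.x, -p.y⟩⟩
instance [Sub A] : Sub (CD A) := ⟨fun p q => ⟨p.x - q.x, p.y - q.y⟩⟩

instance [AddCommGroup A] : AddCommGroup (CD A) where
  add := (· + ·)
  add_assoc a b c := CD.ext (add_assoc _ _ _) (add_assoc _ _ _)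
  zero := 0
  zero_add a := CD.ext (zero_add _) (zero_add _)
  add_zero a := CD.ext (add_zero _) (add_zero _)
  add_comm a b := CD.ext (add_comm _ _) (add_comm _ _)
  neg := Neg.neg
  sub := Sub.sub
  sub_eq_add_neg a b := CD.ext (sub_eq_add_neg _ _) (sub_eq_add_neg _ _)
  neg_add_cancel a := CD.ext (neg_add_cancel _) (neg_add_cancel _)
  nsmul := nsmulRec
  zsmul := zsmulRec

instance [One A] [Zero A] : One (CD A) := ⟨⟨1, 0⟩⟩

instance [SMul ℝ A] : SMul ℝ (CD A) := ⟨fun r p => ⟨r • p.x, r • p.y⟩⟩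

instance [Star A] [Neg A] : Star (CD A) := ⟨fun p => ⟨star p.x, -p.y⟩⟩

/-- The Cayley–Dickson multiplication. -/
instance [Mul A] [Add A] [Sub A] [Star A] : Mul (CD A) :=
  ⟨fun p q => ⟨p.x * q.x - star q.y * p.y, q.y * p.x + p.y * star q.x⟩⟩

instance [Zero A] : Inhabited (CD A) := ⟨0⟩

/-- Topology on a Cayley–Dickson double, induced from the product. -/
instance instTopCD [TopologicalSpace A] : TopologicalSpace (CD A) :=
  TopologicalSpace.induced (fun p => (p.x, p.y)) inferInstance

end CD

/-- The octonions `𝕆`, as the Cayley–Dickson double of the quaternions. -/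
abbrev Oct : Type := CD (Quaternion ℝ)

/-- The sedenions `𝔖`, as the Cayley–Dickson double of the octonions. -/
abbrev Sed : Type := CD Oct

namespace Sedenion

/-- The Euclidean inner product of quaternions (in the standard basis). -/
def innerQ (a b : Quaternion ℝ) : ℝ :=
  a.re * b.re + a.imI * b.imI + a.imJ * b.imJ + a.imK * b.imK

/-- The Euclidean inner product of octonions (in the standard basis). -/
def innerO (a b : Oct) : ℝ := innerQ a.x b.x + innerQ a.y b.y

/-- The Euclidean inner product of sedenions (in the standard basis). -/
def innerS (a b : Sed) : ℝ := innerO a.x b.x + innerO a.y b.y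

/-- The Euclidean norm of an octonion. -/
def normO (a : Oct) : ℝ := Real.sqrt (innerO a a)

/-- The Euclidean norm of a sedenion. -/
def normS (a : Sed) : ℝ := Real.sqrt (innerS a a)

/-- The basis element `e₈` of the sedenions. -/
def e8 : Sed := ⟨0, 1⟩

/-- The basis element `e₁` of the octonions. -/
def e1 : Oct := ⟨⟨0, 1, 0, 0⟩, 0⟩

/-- A sedenion `s` is a slice-unit if left multiplication `L_s` satisfies `L_s ∘ L_s = -id`.
(We identify `L_s ∈ 𝒞_𝔖` with `s` itself.) -/
def SliceUnit (s : Sed) : Prop := ∀ a : Sed, s * (s * a) = -a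

/-- The set `𝒞_𝔖` of slice-units. -/
def CS : Set Sed := {s | SliceUnit s}

/-- The plane `ℂ_I = ℝ + ℝ I`. -/
def planeC (I : Sed) : Set Sed := {q | ∃ x y : ℝ, q = x • (1 : Sed) + y • I}

/-- The slice cone `𝒲_𝔖 = ⋃_{I ∈ 𝒞_𝔖} ℂ_I`. -/
def WS : Set Sed := {q | ∃ I, SliceUnit I ∧ q ∈ planeC I}

/-- `p` is a real sedenion. -/
def inR (p : Sed) : Prop := ∃ r : ℝ, p = r • (1 : Sed)

/-- A special triple of octonions. -/
def SpecialTriple (i j k : Oct) : Prop :=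
  normO i = 1 ∧ normO j = 1 ∧ normO k = 1 ∧ (i * j) * k = -(i * (j * k))

/-- A sedenion is a zero divisor if it is nonzero and kills some nonzero sedenion. -/
def IsZeroDivisor (a : Sed) : Prop := a ≠ 0 ∧ ∃ b : Sed, b ≠ 0 ∧ a * b = 0

/-- `ker a = {c : a c = 0}`. -/
def kerL (a : Sed) : Set Sed := {c | a * c = 0}

/-- The `c₈` conjugation `u + v e₈ ↦ u - v e₈`. -/
def c8 (p : Sed) : Sed := ⟨p.x, -p.y⟩

/-- The orthogonal complement (as a set) of a set of sedenions. -/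
def perpSet (K : Set Sed) : Set Sed := {x | ∀ c ∈ K, innerS x c = 0}

/-- `ker (1, I) = {(a,b) : a + I b = 0}`. -/
def ker1 (I : Sed) : Set (Sed × Sed) := {p | p.1 + I * p.2 = 0}

/-- `ker ζ(J) = ⋂_ℓ ker (1, J_ℓ)`. -/
def kerZeta {m : ℕ} (J : Fin m → Sed) : Set (Sed × Sed) := ⋂ ℓ, ker1 (J ℓ)

/-- `𝒞_𝔖^{ker}(J)`. -/
def Csker {m : ℕ} (J : Fin m → Sed) : Set Sed := {I ∈ CS | kerZeta J ⊆ ker1 I}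

/-- `J` is a slice-solution if `𝒞_𝔖^{ker}(J) = 𝒞_𝔖`. -/
def IsSliceSolution {m : ℕ} (J : Fin m → Sed) : Prop := Csker J = CS

/-- `J` is a hyper-solution if it is not a slice-solution and appending any slice-unit
outside `𝒞_𝔖^{ker}(J)` produces a slice-solution. -/
def IsHyperSolution {m : ℕ} (J : Fin m → Sed) : Prop :=
  ¬ IsSliceSolution J ∧ ∀ I ∈ CS \ Csker J, IsSliceSolution (Fin.snoc J I)

/-- `α_[I] = arccos ⟨I, L_{e₈}⟩`. -/
def alphaOf (I : Sed) : ℝ := Real.arccos (innerS I e8)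

/-- The canonical representation
`L(sin α_[I] cos θ · ȷ + (cos α_[I] + sin α_[I] sin θ · ȷ) e₈)` of a slice-unit. -/
def rep (I : Sed) (θ : ℝ) (j : Oct) : Sed :=
  ⟨(Real.sin (alphaOf I) * Real.cos θ) • j,
   Real.cos (alphaOf I) • (1 : Oct) + (Real.sin (alphaOf I) * Real.sin θ) • j⟩

/-- The pair `(θ_[I], ȷ_[I])`, with the convention `(0, e₁)` for `I ∈ {± L_{e₈}}`. -/
def thetaJ (I : Sed) : ℝ × Oct :=
  if I = e8 ∨ I = -e8 then (0, e1)
  else Classical.epsilon fun p : ℝ × Oct =>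
    p.1 ∈ Set.Ico (0 : ℝ) Real.pi ∧ p.2 * p.2 = -1 ∧ I = rep I p.1 p.2

/-- `θ_[I]`. -/
def theta (I : Sed) : ℝ := (thetaJ I).1

/-- `ȷ_[I]`. -/
def jmath (I : Sed) : Oct := (thetaJ I).2

/-- The map `ψ(α, θ, (ı₁, ı₂))`. -/
def psi (α θ : ℝ) (i1 i2 : Oct) : Sed :=
  ⟨(Real.sin α * Real.cos θ) • (Real.cos θ • i1 + Real.sin θ • i2),
   Real.cos α • (1 : Oct) +
     (Real.sin α * Real.sin θ) • (Real.cos θ • i1 + Real.sin θ • i2)⟩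

/-- The pair `ı^{[J]} = (ı₁^{[J]}, ı₂^{[J]})` attached to a pair `J = (J₁, J₂)`. -/
def iotaPair (J₁ J₂ : Sed) : Oct × Oct :=
  Classical.epsilon fun ι : Oct × Oct =>
    ι.1 * ι.1 = -1 ∧ ι.2 * ι.2 = -1 ∧
    jmath J₁ = Real.cos (theta J₁) • ι.1 + Real.sin (theta J₁) • ι.2 ∧
    jmath J₂ = Real.cos (theta J₂) • ι.1 + Real.sin (theta J₂) • ι.2

/-- `Re(p) = ⟨p, 1⟩`. -/
def ReS (p : Sed) : ℝ := innerS p 1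

/-- `I_p` (relative to the fixed slice-unit `I₀`). -/
def Ip (I₀ p : Sed) : Sed :=
  if inR p then I₀ else (normS (p - ReS p • (1 : Sed)))⁻¹ • (p - ReS p • (1 : Sed))

/-- `Im(p) = ⟨p, I_p⟩`. -/
def ImS (I₀ p : Sed) : ℝ := innerS p (Ip I₀ p)

/-- `z_p = Re(p) + Im(p) i ∈ ℂ`. -/
def zp (I₀ p : Sed) : ℂ := (ReS p : ℂ) + (ImS I₀ p : ℂ) * Complex.I

/-- `Ψ_i^I : ℂ → ℂ_I`, `x + y i ↦ x + y I`. -/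
def psiC (I : Sed) (z : ℂ) : Sed := z.re • (1 : Sed) + z.im • I

/-- The convergence radius `R_a ∈ [0, ∞]`. -/
def RA (a : ℕ → Sed) : ℝ≥0∞ :=
  (Filter.limsup (fun ℓ : ℕ => (ENNReal.ofReal (normS (a ℓ))) ^ ((ℓ : ℝ)⁻¹))
    Filter.atTop)⁻¹

/-- Euclidean distance from a sedenion to a set of sedenions. -/
def distSet (a : Sed) (K : Set Sed) : ℝ := sInf ((fun c => normS (a - c)) '' K)

/-- The convergence radius `R_a^{p,J} ∈ [0, ∞]`. -/
def RApJ (I₀ p : Sed) (a : ℕ → Sed) (J : Sed) : ℝ≥0∞ :=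
  if inR p ∨ J = Ip I₀ p then RA a
  else (Filter.limsup
    (fun ℓ : ℕ =>
      (ENNReal.ofReal (distSet (a ℓ) (kerL (Ip I₀ p - J)))) ^ ((ℓ : ℝ)⁻¹))
    Filter.atTop)⁻¹

/-- The convergence radius `R_a^p = sup_{K ∈ 𝒞_𝔖} R_a^{p,K}`. -/
def RAp (I₀ p : Sed) (a : ℕ → Sed) : ℝ≥0∞ := ⨆ K ∈ CS, RApJ I₀ p a K

/-- A choice of `J ∈ 𝒞_𝔖` with `R_a^{p,J} = R_a^p`. -/
def Jchoice (I₀ p : Sed) (a : ℕ → Sed) : Sed :=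
  Classical.epsilon fun J => J ∈ CS ∧ RApJ I₀ p a J = RAp I₀ p a

/-- `B^*(z, r) ⊆ ℂ`. -/
def BstarC (z : ℂ) (r : ℝ≥0∞) : Set ℂ :=
  {w | ENNReal.ofReal ‖w - z‖ < r} ∪ {z}

/-- The open ball `B(z, r) ⊆ ℂ` (with extended real radius). -/
def BC (z : ℂ) (r : ℝ≥0∞) : Set ℂ :=
  {w | ENNReal.ofReal ‖w - z‖ < r}

/-- `B^*_{𝒲_𝔖}(p, r)`. -/
def BstarW (p : Sed) (r : ℝ≥0∞) : Set Sed :=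
  {q ∈ WS | ENNReal.ofReal (normS (p - q)) < r} ∪ {p}

/-- The open ball `B_{𝒲_𝔖}(p, r)`. -/
def BW (p : Sed) (r : ℝ≥0∞) : Set Sed :=
  {q ∈ WS | ENNReal.ofReal (normS (p - q)) < r}

/-- The σ-ball `Σ(p, r)`. -/
def sigmaBall (I₀ p : Sed) (r : ℝ≥0∞) : Set Sed :=
  (⋃ J ∈ CS,
    psiC J '' (BstarC (zp I₀ p) r ∩ BstarC ((starRingEnd ℂ) (zp I₀ p)) r)) ∪
  psiC (Ip I₀ p) '' BstarC (zp I₀ p) r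

/-- The "open" σ-ball (with `B` in place of `B^*`). -/
def sigmaBallo (I₀ p : Sed) (r : ℝ≥0∞) : Set Sed :=
  (⋃ J ∈ CS,
    psiC J '' (BC (zp I₀ p) r ∩ BC ((starRingEnd ℂ) (zp I₀ p)) r)) ∪
  psiC (Ip I₀ p) '' BC (zp I₀ p) r

/-- The hyper-σ-ball `Σ(p, r, (J₁, J₂))`. -/
def hyperSigma (I₀ p : Sed) (r : ℝ≥0∞) (J₁ J₂ : Sed) : Set Sed :=
  (⋃ K ∈ CS,
    psiC K '' (BstarC (zp I₀ p) r ∩ BstarC ((starRingEnd ℂ) (zp I₀ p)) r)) ∪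
  (⋃ K ∈ Csker ![J₁, J₂], psiC K '' BstarC (zp I₀ p) r)

/-- The "open" hyper-σ-ball (with `B` in place of `B^*`). -/
def hyperSigmao (I₀ p : Sed) (r : ℝ≥0∞) (J₁ J₂ : Sed) : Set Sed :=
  (⋃ K ∈ CS,
    psiC K '' (BC (zp I₀ p) r ∩ BC ((starRingEnd ℂ) (zp I₀ p)) r)) ∪
  (⋃ K ∈ Csker ![J₁, J₂], psiC K '' BC (zp I₀ p) r)

/-- The convergence domain `Σ(p, a)`. -/
def SigmaPA (I₀ p : Sed) (a : ℕ → Sed) : Set Sed :=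
  if inR p then BstarW p (RA a)
  else if RAp I₀ p a = RA a then sigmaBall I₀ p (RAp I₀ p a)
  else hyperSigma I₀ p (RA a) (Ip I₀ p) (Jchoice I₀ p a) ∩
      sigmaBall I₀ p (RAp I₀ p a)

/-- The shrunk convergence domain `Σ(p, a, ε)`. -/
def SigmaPAeps (I₀ p : Sed) (a : ℕ → Sed) (ε : ℝ≥0∞) : Set Sed :=
  if inR p then BW p (RA a - ε)
  else if RAp I₀ p a = RA a then sigmaBallo I₀ p (RAp I₀ p a - ε)
  else hyperSigmao I₀ p (RA a - ε) (Ip I₀ p) (Jchoice I₀ p a) ∩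
      sigmaBallo I₀ p (RAp I₀ p a - ε)

/-- (Left-normed) powers of a sedenion. -/
def spow (q : Sed) : ℕ → Sed
  | 0 => 1
  | n + 1 => spow q n * q

/-- The star-power `(q - p)^{*ℓ} = ∑_{k=0}^{ℓ} C(ℓ, k) q^{ℓ-k} (-p)^k`. -/
def starPow (q p : Sed) (ℓ : ℕ) : Sed :=
  ∑ k ∈ Finset.range (ℓ + 1), ((ℓ.choose k : ℝ)) • (spow q (ℓ - k) * spow (-p) k)

/-- `Ω` is slice-open: `Ω ⊆ 𝒲_𝔖` and every slice `Ω ∩ ℂ_I` is open in `ℂ_I ≅ ℝ²`. -/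
def SliceOpen (Ω : Set Sed) : Prop :=
  Ω ⊆ WS ∧ ∀ I ∈ CS, IsOpen {z : ℝ × ℝ | z.1 • (1 : Sed) + z.2 • I ∈ Ω}

/-- `g : ℝ² → 𝔖` is real differentiable at `z` with partial derivatives `fx`, `fy`. -/
def RDiff (g : ℝ × ℝ → Sed) (z : ℝ × ℝ) (fx fy : Sed) : Prop :=
  Filter.Tendsto
    (fun w : ℝ × ℝ =>
      normS (g w - g z - (w.1 - z.1) • fx - (w.2 - z.2) • fy) / dist w z)
    (nhdsWithin z {z}ᶜ) (nhds 0)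

/-- `f` is slice regular on `Ω`: on every slice it is real differentiable and
satisfies the Cauchy–Riemann equation `∂_x f + I ∂_y f = 0`. -/
def SliceRegular (Ω : Set Sed) (f : Sed → Sed) : Prop :=
  ∀ I ∈ CS, ∀ z : ℝ × ℝ, z.1 • (1 : Sed) + z.2 • I ∈ Ω →
    ∃ fx fy : Sed,
      RDiff (fun w : ℝ × ℝ => f (w.1 • (1 : Sed) + w.2 • I)) z fx fy ∧
      fx + I * fy = 0

/-- `U` is connected in the slice topology. -/
def SliceConnected (U : Set Sed) : Prop :=
  U.Nonempty ∧
  ¬ ∃ A B : Set Sed, SliceOpen A ∧ SliceOpen B ∧ U ⊆ A ∪ B ∧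
      (A ∩ U).Nonempty ∧ (B ∩ U).Nonempty ∧ A ∩ B ∩ U = ∅

/-- `Ω` is a domain of slice regularity. -/
def IsDomainOfSliceRegularity (Ω : Set Sed) : Prop :=
  SliceOpen Ω ∧
  ¬ ∃ Ω₁ Ω₂ : Set Sed, SliceOpen Ω₁ ∧ SliceOpen Ω₂ ∧
      Ω₁.Nonempty ∧ Ω₁ ⊆ Ω₂ ∩ Ω ∧
      SliceConnected Ω₂ ∧ ¬ Ω₂ ⊆ Ω ∧
      ∀ f : Sed → Sed, SliceRegular Ω f →
        ∃ g : Sed → Sed, SliceRegular Ω₂ g ∧ Set.EqOn f g Ω₁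

/-- The exterior of `V` in the slice topology on `𝒲_𝔖`:
the union of all slice-open sets disjoint from `V`. -/
def extS (V : Set Sed) : Set Sed := ⋃₀ {U | SliceOpen U ∧ U ∩ V = ∅}

/-- The closure of `V` in the slice topology on `𝒲_𝔖`:
the intersection of all slice-closed supersets of `V`. -/
def cloS (V : Set Sed) : Set Sed := ⋂₀ {C | C ⊆ WS ∧ SliceOpen (WS \ C) ∧ V ⊆ C}

/-- `ℍ_p = ℝ + ℝ p^{𝕆_L} + ℝ p^{𝕆_R} + ℝ (p^{𝕆_L} p^{𝕆_R}) ⊆ 𝕆`. -/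
def Hp (p : Sed) : Set Oct :=
  {h | ∃ t u v w : ℝ, h = t • (1 : Oct) + u • p.x + v • p.y + w • (p.x * p.y)}

/-- `𝕆_p = ℍ_p + ℍ_p e₈ ⊆ 𝔖`. -/
def Op (p : Sed) : Set Sed := {s | ∃ h₁ ∈ Hp p, ∃ h₂ ∈ Hp p, s = CD.mk h₁ h₂}

/-- `𝔠_p = ℝ + ℝ p^{𝕆_L} + ℝ p^{𝕆_R} + ℝ e₈ + ℝ p^{𝕆_L} e₈ + ℝ p^{𝕆_R} e₈ ⊆ 𝔖`. -/
def frakC (p : Sed) : Set Sed :=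
  {s | ∃ t u v t' u' v' : ℝ,
    s = CD.mk (t • (1 : Oct) + u • p.x + v • p.y)
        (t' • (1 : Oct) + u' • p.x + v' • p.y)}

/-- The open half-plane `ℂ_J^+`. -/
def halfPlane (J : Sed) : Set Sed :=
  {q | ∃ x y : ℝ, 0 < y ∧ q = x • (1 : Sed) + y • J}

/-- The disc `B_J(w, r) ⊆ ℂ_J`. -/
def BJball (J w : Sed) (r : ℝ≥0∞) : Set Sed :=
  {v ∈ planeC J | ENNReal.ofReal (normS (v - w)) < r}

/-- The convergence set `𝔹 = B_J(z_p^J, R_a) ∩ B_J(z_p^{-J}, R_a^{p,J}) ∩ ℂ_J^+`. -/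
def BB (I₀ J p : Sed) (a : ℕ → Sed) : Set Sed :=
  BJball J (psiC J (zp I₀ p)) (RA a) ∩
    BJball J (psiC (-J) (zp I₀ p)) (RApJ I₀ p a J) ∩ halfPlane J

/-- `ℋ(I) = {K ∈ 𝒞_𝔖 \ {I} : (I, K) is a hyper-solution}`. -/
def Hset (I : Sed) : Set Sed := {K ∈ CS | K ≠ I ∧ IsHyperSolution ![I, K]}

/-- `𝕊_𝕆(I) = {κ ∈ 𝕊_𝕆 : κ ⟂ ȷ_[I]}`. -/
def SOI (I : Sed) : Set Oct := {κ | κ * κ = -1 ∧ innerO κ (jmath I) = 0}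

/-- The pair `ı^{{I,κ}}`. -/
def iotaIK (I : Sed) (κ : Oct) : Oct × Oct :=
  (Real.cos (theta I) • jmath I - Real.sin (theta I) • κ,
   Real.sin (theta I) • jmath I + Real.cos (theta I) • κ)

/-- The map `φ[I] : 𝕊_𝕆(I) × [0, π) → 𝒞_𝔖`. -/
def phiI (I : Sed) (κ : Oct) (ϑ : ℝ) : Sed :=
  psi (alphaOf I) ϑ (iotaIK I κ).1 (iotaIK I κ).2

/-- `E_[I] = 𝕊_𝕆(I) × ([0, π) \ {θ_[I]})`. -/
def EI (I : Sed) : Set (Oct × ℝ) :=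
  (SOI I) ×ˢ (Set.Ico (0 : ℝ) Real.pi \ {theta I})

end Sedenion

namespace Sedenion

lemma quat_simp : True := trivial

lemma innerO_compL (x y z : Oct) : innerO (x * z) (y * z) = innerO x y * innerO z z := by
  obtain ⟨x1, x2⟩ := x; obtain ⟨y1, y2⟩ := y; obtain ⟨z1, z2⟩ := z
  show innerO ⟨x1 * z1 - star z2 * x2, z2 * x1 + x2 * star z1⟩
      ⟨y1 * z1 - star z2 * y2, z2 * y1 + y2 * star z1⟩ = _
  simp only [innerO, innerQ, Quaternion.re_mul, Quaternion.imI_mul, Quaternion.imJ_mul,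
    Quaternion.imK_mul, Quaternion.re_sub, Quaternion.imI_sub, Quaternion.imJ_sub,
    Quaternion.imK_sub, Quaternion.re_add, Quaternion.imI_add, Quaternion.imJ_add,
    Quaternion.imK_add, Quaternion.re_star, Quaternion.imI_star, Quaternion.imJ_star,
    Quaternion.imK_star]
  ring

lemma innerO_compR (x y z : Oct) : innerO (z * x) (z * y) = innerO z z * innerO x y := by
  obtain ⟨x1, x2⟩ := x; obtain ⟨y1, y2⟩ := y; obtain ⟨z1, z2⟩ := z
  show innerO ⟨z1 * x1 - star x2 * z2, x2 * z1 + z2 * star x1⟩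
      ⟨z1 * y1 - star y2 * z2, y2 * z1 + z2 * star y1⟩ = _
  simp only [innerO, innerQ, Quaternion.re_mul, Quaternion.imI_mul, Quaternion.imJ_mul,
    Quaternion.imK_mul, Quaternion.re_sub, Quaternion.imI_sub, Quaternion.imJ_sub,
    Quaternion.imK_sub, Quaternion.re_add, Quaternion.imI_add, Quaternion.imJ_add,
    Quaternion.imK_add, Quaternion.re_star, Quaternion.imI_star, Quaternion.imJ_star,
    Quaternion.imK_star]
  ring

lemma innerO_star (z : Oct) : innerO (star z) (star z) = innerO z z := by
  obtain ⟨z1, z2⟩ := z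
  show innerO ⟨star z1, -z2⟩ ⟨star z1, -z2⟩ = _
  simp only [innerO, innerQ, Quaternion.re_star, Quaternion.imI_star, Quaternion.imJ_star,
    Quaternion.imK_star, Quaternion.re_neg, Quaternion.imI_neg, Quaternion.imJ_neg,
    Quaternion.imK_neg]
  ring

lemma innerO_self_nonneg (z : Oct) : 0 ≤ innerO z z := by
  obtain ⟨z1, z2⟩ := z
  simp only [innerO, innerQ]
  nlinarith [mul_self_nonneg z1.re, mul_self_nonneg z1.imI, mul_self_nonneg z1.imJ,
    mul_self_nonneg z1.imK, mul_self_nonneg z2.re, mul_self_nonneg z2.imI,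
    mul_self_nonneg z2.imJ, mul_self_nonneg z2.imK]

lemma innerO_self_pos (z : Oct) (hz : z ≠ 0) : 0 < innerO z z := by
  rcases lt_or_eq_of_le (innerO_self_nonneg z) with h | h
  · exact h
  · exfalso; apply hz
    obtain ⟨z1, z2⟩ := z
    simp only [innerO, innerQ] at h
    have h1 : z1.re = 0 ∧ z1.imI = 0 ∧ z1.imJ = 0 ∧ z1.imK = 0 ∧
        z2.re = 0 ∧ z2.imI = 0 ∧ z2.imJ = 0 ∧ z2.imK = 0 := by
      constructor; · nlinarith [sq_nonneg z1.re, sq_nonneg z1.imI]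
      constructor; · nlinarith
      constructor; · nlinarith
      constructor; · nlinarith
      constructor; · nlinarith
      constructor; · nlinarith
      constructor; · nlinarith
      nlinarith
    obtain ⟨e1, e2, e3, e4, e5, e6, e7, e8⟩ := h1
    have hz1 : z1 = 0 := by ext <;> assumption
    have hz2 : z2 = 0 := by ext <;> assumption
    show (⟨z1, z2⟩ : Oct) = ⟨0, 0⟩
    rw [hz1, hz2]

set_option maxHeartbeats 1000000 in
theorem stmt2 (a₁ a₂ b₁ b₂ c d : Oct)
    (h₁ : (CD.mk a₁ b₁ : Sed) * CD.mk c d = 0)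
    (h₂ : (CD.mk a₂ b₂ : Sed) * CD.mk c d = 0)
    (hcd : (CD.mk c d : Sed) ≠ 0) :
    innerO a₁ a₂ = innerO b₁ b₂ := by
  have e1x : a₁ * c - star d * b₁ = 0 := congrArg CD.x h₁
  have e1y : d * a₁ + b₁ * star c = 0 := congrArg CD.y h₁
  have e2x : a₂ * c - star d * b₂ = 0 := congrArg CD.x h₂
  have e2y : d * a₂ + b₂ * star c = 0 := congrArg CD.y h₂
  have f1x : a₁ * c = star d * b₁ := by linear_combination (norm := abel) e1x
  have f2x : a₂ * c = star d * b₂ := by linear_combination (norm := abel) e2x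
  have f1y : d * a₁ = -(b₁ * star c) := by linear_combination (norm := abel) e1y
  have f2y : d * a₂ = -(b₂ * star c) := by linear_combination (norm := abel) e2y
  have key1 : innerO a₁ a₂ * innerO c c = innerO d d * innerO b₁ b₂ := by
    calc innerO a₁ a₂ * innerO c c = innerO (a₁ * c) (a₂ * c) := (innerO_compL _ _ _).symm
    _ = innerO (star d * b₁) (star d * b₂) := by rw [f1x, f2x]
    _ = innerO (star d) (star d) * innerO b₁ b₂ := innerO_compR _ _ _
    _ = innerO d d * innerO b₁ b₂ := by rw [innerO_star]
  have key2 : innerO d d * innerO a₁ a₂ = innerO b₁ b₂ * innerO c c := by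
    calc innerO d d * innerO a₁ a₂ = innerO (d * a₁) (d * a₂) := (innerO_compR _ _ _).symm
    _ = innerO (-(b₁ * star c)) (-(b₂ * star c)) := by rw [f1y, f2y]
    _ = innerO (b₁ * star c) (b₂ * star c) := by
        obtain ⟨u1, u2⟩ := b₁ * star c; obtain ⟨v1, v2⟩ := b₂ * star c
        show innerO ⟨-u1, -u2⟩ ⟨-v1, -v2⟩ = _
        simp only [innerO, innerQ, Quaternion.re_neg, Quaternion.imI_neg, Quaternion.imJ_neg,
          Quaternion.imK_neg]
        ring
    _ = innerO b₁ b₂ * innerO (star c) (star c) := innerO_compL _ _ _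
    _ = innerO b₁ b₂ * innerO c c := by rw [innerO_star]
  have hpos : 0 < innerO c c + innerO d d := by
    rcases Classical.em (c = 0) with hc | hc
    · have hd : d ≠ 0 := by
        intro hd; apply hcd; show (⟨c, d⟩ : Sed) = ⟨0, 0⟩; rw [hc, hd]
      have := innerO_self_pos d hd
      have := innerO_self_nonneg c
      linarith
    · have := innerO_self_pos c hc
      have := innerO_self_nonneg d
      linarith
  have : (innerO c c + innerO d d) * innerO a₁ a₂ = (innerO c c + innerO d d) * innerO b₁ b₂ := by
    nlinarith [key1, key2]
  exact mul_left_cancel₀ (ne_of_gt hpos) this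

end Sedenion
end
end

section
/- Let p ∈ 𝔖, p ≠ 0, be a zero divisor. Then for every a in the real subspace 𝔠_p := ℝ + ℝ p^{𝕆_L} + ℝ p^{𝕆_R} + ℝ e₈ + ℝ p^{𝕆_L} e₈ + ℝ p^{𝕆_R} e₈ of 𝔖, one has a · ker p ⊆ ker p. -/
open scoped ENNReal
open Classical

noncomputable section

namespace CD
variable {A : Type}
@[simp] lemma mul_x [Mul A] [Add A] [Sub A] [Star A] (p q : CD A) : (p*q).x = p.x * q.x - star q.y * p.y := rfl
@[simp] lemma mul_y [Mul A] [Add A] [Sub A] [Star A] (p q : CD A) : (p*q).y = q.y * p.x + p.y * star q.x := rfl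
@[simp] lemma add_x [Add A] (p q : CD A) : (p+q).x = p.x + q.x := rfl
@[simp] lemma add_y [Add A] (p q : CD A) : (p+q).y = p.y + q.y := rfl
@[simp] lemma sub_x [Sub A] (p q : CD A) : (p-q).x = p.x - q.x := rfl
@[simp] lemma sub_y [Sub A] (p q : CD A) : (p-q).y = p.y - q.y := rfl
@[simp] lemma neg_x [Neg A] (p : CD A) : (-p).x = -p.x := rfl
@[simp] lemma neg_y [Neg A] (p : CD A) : (-p).y = -p.y := rfl
@[simp] lemma smul_x [SMul ℝ A] (r : ℝ) (p : CD A) : (r • p).x = r • p.x := rfl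
@[simp] lemma smul_y [SMul ℝ A] (r : ℝ) (p : CD A) : (r • p).y = r • p.y := rfl
@[simp] lemma star_x [Star A] [Neg A] (p : CD A) : (star p).x = star p.x := rfl
@[simp] lemma star_y [Star A] [Neg A] (p : CD A) : (star p).y = -p.y := rfl
@[simp] lemma zero_x [Zero A] : (0 : CD A).x = 0 := rfl
@[simp] lemma zero_y [Zero A] : (0 : CD A).y = 0 := rfl
@[simp] lemma one_x [One A] [Zero A] : (1 : CD A).x = 1 := rfl
@[simp] lemma one_y [One A] [Zero A] : (1 : CD A).y = 0 := rfl
@[simp] lemma mk_x (a b : A) : (CD.mk a b).x = a := rfl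
@[simp] lemma mk_y (a b : A) : (CD.mk a b).y = b := rfl
end CD

namespace Sedenion

set_option maxHeartbeats 4000000 in
private lemma stmt15key (p c : Sed) (t u v t' u' v' : ℝ) (hc : p * c = 0)
    (hre1 : p.x.x.re = 0) (hre2 : p.y.x.re = 0)
    (hnn : p.x.x.re*p.x.x.re + p.x.x.imI*p.x.x.imI + p.x.x.imJ*p.x.x.imJ + p.x.x.imK*p.x.x.imK + p.x.y.re*p.x.y.re + p.x.y.imI*p.x.y.imI + p.x.y.imJ*p.x.y.imJ + p.x.y.imK*p.x.y.imK = p.y.x.re*p.y.x.re + p.y.x.imI*p.y.x.imI + p.y.x.imJ*p.y.x.imJ + p.y.x.imK*p.y.x.imK + p.y.y.re*p.y.y.re + p.y.y.imI*p.y.y.imI + p.y.y.imJ*p.y.y.imJ + p.y.y.imK*p.y.y.imK)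
    (huv : p.x.x.re*p.y.x.re + p.x.x.imI*p.y.x.imI + p.x.x.imJ*p.y.x.imJ + p.x.x.imK*p.y.x.imK + p.x.y.re*p.y.y.re + p.x.y.imI*p.y.y.imI + p.x.y.imJ*p.y.y.imJ + p.x.y.imK*p.y.y.imK = 0) :
    p * ((CD.mk (t • (1:Oct) + u • p.x + v • p.y) (t' • (1:Oct) + u' • p.x + v' • p.y) : Sed) * c) = 0 := by
  have h0 : (p*c).x.x.re = 0 := by rw [hc]; rfl
  have h1 : (p*c).x.x.imI = 0 := by rw [hc]; rfl
  have h2 : (p*c).x.x.imJ = 0 := by rw [hc]; rfl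
  have h3 : (p*c).x.x.imK = 0 := by rw [hc]; rfl
  have h4 : (p*c).x.y.re = 0 := by rw [hc]; rfl
  have h5 : (p*c).x.y.imI = 0 := by rw [hc]; rfl
  have h6 : (p*c).x.y.imJ = 0 := by rw [hc]; rfl
  have h7 : (p*c).x.y.imK = 0 := by rw [hc]; rfl
  have h8 : (p*c).y.x.re = 0 := by rw [hc]; rfl
  have h9 : (p*c).y.x.imI = 0 := by rw [hc]; rfl
  have h10 : (p*c).y.x.imJ = 0 := by rw [hc]; rfl
  have h11 : (p*c).y.x.imK = 0 := by rw [hc]; rfl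
  have h12 : (p*c).y.y.re = 0 := by rw [hc]; rfl
  have h13 : (p*c).y.y.imI = 0 := by rw [hc]; rfl
  have h14 : (p*c).y.y.imJ = 0 := by rw [hc]; rfl
  have h15 : (p*c).y.y.imK = 0 := by rw [hc]; rfl
  simp only [CD.mul_x, CD.mul_y, CD.add_x, CD.add_y, CD.sub_x, CD.sub_y, CD.neg_x, CD.neg_y,
    CD.smul_x, CD.smul_y, CD.star_x, CD.star_y, CD.zero_x, CD.zero_y, CD.one_x, CD.one_y,
    CD.mk_x, CD.mk_y,
    Quaternion.re_mul, Quaternion.imI_mul, Quaternion.imJ_mul, Quaternion.imK_mul,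
    Quaternion.re_add, Quaternion.imI_add, Quaternion.imJ_add, Quaternion.imK_add,
    Quaternion.re_sub, Quaternion.imI_sub, Quaternion.imJ_sub, Quaternion.imK_sub,
    Quaternion.re_neg, Quaternion.imI_neg, Quaternion.imJ_neg, Quaternion.imK_neg,
    Quaternion.re_smul, Quaternion.imI_smul, Quaternion.imJ_smul, Quaternion.imK_smul,
    Quaternion.re_star, Quaternion.imI_star, Quaternion.imJ_star, Quaternion.imK_star,
    Quaternion.re_one, Quaternion.imI_one, Quaternion.imJ_one, Quaternion.imK_one,
    Quaternion.re_zero, Quaternion.imI_zero, Quaternion.imJ_zero, Quaternion.imK_zero,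
    smul_eq_mul] at h0 h1 h2 h3 h4 h5 h6 h7 h8 h9 h10 h11 h12 h13 h14 h15
  ext
  all_goals simp only [CD.mul_x, CD.mul_y, CD.add_x, CD.add_y, CD.sub_x, CD.sub_y, CD.neg_x, CD.neg_y,
    CD.smul_x, CD.smul_y, CD.star_x, CD.star_y, CD.zero_x, CD.zero_y, CD.one_x, CD.one_y,
    CD.mk_x, CD.mk_y,
    Quaternion.re_mul, Quaternion.imI_mul, Quaternion.imJ_mul, Quaternion.imK_mul,
    Quaternion.re_add, Quaternion.imI_add, Quaternion.imJ_add, Quaternion.imK_add,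
    Quaternion.re_sub, Quaternion.imI_sub, Quaternion.imJ_sub, Quaternion.imK_sub,
    Quaternion.re_neg, Quaternion.imI_neg, Quaternion.imJ_neg, Quaternion.imK_neg,
    Quaternion.re_smul, Quaternion.imI_smul, Quaternion.imJ_smul, Quaternion.imK_smul,
    Quaternion.re_star, Quaternion.imI_star, Quaternion.imJ_star, Quaternion.imK_star,
    Quaternion.re_one, Quaternion.imI_one, Quaternion.imJ_one, Quaternion.imK_one,
    Quaternion.re_zero, Quaternion.imI_zero, Quaternion.imJ_zero, Quaternion.imK_zero,
    smul_eq_mul]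
  · linear_combination (norm := ring1) (t + v*p.y.x.re + v'*p.x.x.re)*h0 + (v*p.y.x.imI + (-1)*v'*p.x.x.imI)*h1 + (v*p.y.x.imJ + (-1)*v'*p.x.x.imJ)*h2 + (v*p.y.x.imK + (-1)*v'*p.x.x.imK)*h3 + (v*p.y.y.re + (-1)*v'*p.x.y.re)*h4 + (v*p.y.y.imI + (-1)*v'*p.x.y.imI)*h5 + (v*p.y.y.imJ + (-1)*v'*p.x.y.imJ)*h6 + (v*p.y.y.imK + (-1)*v'*p.x.y.imK)*h7 + ((-1)*u*p.y.x.re + -2*v*p.x.x.re + u'*p.x.x.re + t')*h8 + ((-1)*u*p.y.x.imI + u'*p.x.x.imI)*h9 + ((-1)*u*p.y.x.imJ + u'*p.x.x.imJ)*h10 + ((-1)*u*p.y.x.imK + u'*p.x.x.imK)*h11 + ((-1)*u*p.y.y.re + u'*p.x.y.re)*h12 + ((-1)*u*p.y.y.imI + u'*p.x.y.imI)*h13 + ((-1)*u*p.y.y.imJ + u'*p.x.y.imJ)*h14 + ((-1)*u*p.y.y.imK + u'*p.x.y.imK)*h15 + (2*u*p.x.x.re*c.x.x.re + -2*u*p.x.x.imI*c.x.x.imI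 + -2*u*p.x.x.imJ*c.x.x.imJ + -2*u*p.x.x.imK*c.x.x.imK + -2*u*p.x.y.re*c.x.y.re + -2*u*p.x.y.imI*c.x.y.imI + -2*u*p.x.y.imJ*c.x.y.imJ + -2*u*p.x.y.imK*c.x.y.imK + 2*v*p.x.x.re*c.y.x.re + -2*v*p.x.x.imI*c.y.x.imI + -2*v*p.x.x.imJ*c.y.x.imJ + -2*v*p.x.x.imK*c.y.x.imK + -2*v*p.x.y.re*c.y.y.re + -2*v*p.x.y.imI*c.y.y.imI + -2*v*p.x.y.imJ*c.y.y.imJ + -2*v*p.x.y.imK*c.y.y.imK + 4*v*p.y.x.re*c.x.x.re + -2*u'*p.x.x.re*c.y.x.re + -2*u'*p.x.x.imI*c.y.x.imI + -2*u'*p.x.x.imJ*c.y.x.imJ + -2*u'*p.x.x.imK*c.y.x.imK + -2*u'*p.x.y.re*c.y.y.re + -2*u'*p.x.y.imI*c.y.y.imI + -2*u'*p.x.y.imJ*c.y.y.imJ + -2*u'*p.x.y.imK*c.y.y.imK + -2*v'*p.x.x.re*c.x.x.re + 2*v'*p.x.x.imI*c.x.x.imI + 2*v'*p.x.x.imJ*c.x.x.imJ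 + 2*v'*p.x.x.imK*c.x.x.imK + 2*v'*p.x.y.re*c.x.y.re + 2*v'*p.x.y.imI*c.x.y.imI + 2*v'*p.x.y.imJ*c.x.y.imJ + 2*v'*p.x.y.imK*c.x.y.imK + -2*t'*c.y.x.re)*hre1 + (-2*t'*c.x.x.re)*hre2 + ((-1)*u*c.x.x.re + v'*c.x.x.re)*hnn + (-2*v*c.x.x.re + -2*u'*c.x.x.re)*huv
  · linear_combination (norm := ring1) ((-1)*v*p.y.x.imI + v'*p.x.x.imI)*h0 + (t + v*p.y.x.re + v'*p.x.x.re)*h1 + (v*p.y.x.imK + (-1)*v'*p.x.x.imK)*h2 + ((-1)*v*p.y.x.imJ + v'*p.x.x.imJ)*h3 + (v*p.y.y.imI + (-1)*v'*p.x.y.imI)*h4 + ((-1)*v*p.y.y.re + v'*p.x.y.re)*h5 + ((-1)*v*p.y.y.imK + v'*p.x.y.imK)*h6 + (v*p.y.y.imJ + (-1)*v'*p.x.y.imJ)*h7 + ((-1)*u*p.y.x.imI + u'*p.x.x.imI)*h8 + (u*p.y.x.re + -2*v*p.x.x.re + (-1)*u'*p.x.x.re + (-1)*t')*h9 + (u*p.y.x.imK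 + (-1)*u'*p.x.x.imK)*h10 + ((-1)*u*p.y.x.imJ + u'*p.x.x.imJ)*h11 + (u*p.y.y.imI + (-1)*u'*p.x.y.imI)*h12 + ((-1)*u*p.y.y.re + u'*p.x.y.re)*h13 + ((-1)*u*p.y.y.imK + u'*p.x.y.imK)*h14 + (u*p.y.y.imJ + (-1)*u'*p.x.y.imJ)*h15 + (2*u*p.x.x.re*c.x.x.imI + 2*u*p.x.x.imI*c.x.x.re + 2*u*p.x.x.imJ*c.x.x.imK + -2*u*p.x.x.imK*c.x.x.imJ + 2*u*p.x.y.re*c.x.y.imI + -2*u*p.x.y.imI*c.x.y.re + -2*u*p.x.y.imJ*c.x.y.imK + 2*u*p.x.y.imK*c.x.y.imJ + 2*v*p.x.x.re*c.y.x.imI + 2*v*p.x.x.imI*c.y.x.re + -2*v*p.x.x.imJ*c.y.x.imK + 2*v*p.x.x.imK*c.y.x.imJ + -2*v*p.x.y.re*c.y.y.imI + 2*v*p.x.y.imI*c.y.y.re + 2*v*p.x.y.imJ*c.y.y.imK + -2*v*p.x.y.imK*c.y.y.imJ + 4*v*p.y.x.imI*c.x.x.re + 2*u'*p.x.x.re*c.y.x.imI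 + -2*u'*p.x.x.imI*c.y.x.re + -2*u'*p.x.x.imJ*c.y.x.imK + 2*u'*p.x.x.imK*c.y.x.imJ + -2*u'*p.x.y.re*c.y.y.imI + 2*u'*p.x.y.imI*c.y.y.re + 2*u'*p.x.y.imJ*c.y.y.imK + -2*u'*p.x.y.imK*c.y.y.imJ + -2*v'*p.x.x.re*c.x.x.imI + -2*v'*p.x.x.imI*c.x.x.re + -2*v'*p.x.x.imJ*c.x.x.imK + 2*v'*p.x.x.imK*c.x.x.imJ + -2*v'*p.x.y.re*c.x.y.imI + 2*v'*p.x.y.imI*c.x.y.re + 2*v'*p.x.y.imJ*c.x.y.imK + -2*v'*p.x.y.imK*c.x.y.imJ + 2*t'*c.y.x.imI)*hre1 + (-2*t'*c.x.x.imI)*hre2 + ((-1)*u*c.x.x.imI + v'*c.x.x.imI)*hnn + (-2*v*c.x.x.imI + -2*u'*c.x.x.imI)*huv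
  · linear_combination (norm := ring1) ((-1)*v*p.y.x.imJ + v'*p.x.x.imJ)*h0 + ((-1)*v*p.y.x.imK + v'*p.x.x.imK)*h1 + (t + v*p.y.x.re + v'*p.x.x.re)*h2 + (v*p.y.x.imI + (-1)*v'*p.x.x.imI)*h3 + (v*p.y.y.imJ + (-1)*v'*p.x.y.imJ)*h4 + (v*p.y.y.imK + (-1)*v'*p.x.y.imK)*h5 + ((-1)*v*p.y.y.re + v'*p.x.y.re)*h6 + ((-1)*v*p.y.y.imI + v'*p.x.y.imI)*h7 + ((-1)*u*p.y.x.imJ + u'*p.x.x.imJ)*h8 + ((-1)*u*p.y.x.imK + u'*p.x.x.imK)*h9 + (u*p.y.x.re + -2*v*p.x.x.re + (-1)*u'*p.x.x.re + (-1)*t')*h10 + (u*p.y.x.imI + (-1)*u'*p.x.x.imI)*h11 + (u*p.y.y.imJ + (-1)*u'*p.x.y.imJ)*h12 + (u*p.y.y.imK + (-1)*u'*p.x.y.imK)*h13 + ((-1)*u*p.y.y.re + u'*p.x.y.re)*h14 + ((-1)*u*p.y.y.imI + u'*p.x.y.imI)*h15 + (2*u*p.x.x.re*c.x.x.imJ +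 -2*u*p.x.x.imI*c.x.x.imK + 2*u*p.x.x.imJ*c.x.x.re + 2*u*p.x.x.imK*c.x.x.imI + 2*u*p.x.y.re*c.x.y.imJ + 2*u*p.x.y.imI*c.x.y.imK + -2*u*p.x.y.imJ*c.x.y.re + -2*u*p.x.y.imK*c.x.y.imI + 2*v*p.x.x.re*c.y.x.imJ + 2*v*p.x.x.imI*c.y.x.imK + 2*v*p.x.x.imJ*c.y.x.re + -2*v*p.x.x.imK*c.y.x.imI + -2*v*p.x.y.re*c.y.y.imJ + -2*v*p.x.y.imI*c.y.y.imK + 2*v*p.x.y.imJ*c.y.y.re + 2*v*p.x.y.imK*c.y.y.imI + 4*v*p.y.x.imJ*c.x.x.re + 2*u'*p.x.x.re*c.y.x.imJ + 2*u'*p.x.x.imI*c.y.x.imK + -2*u'*p.x.x.imJ*c.y.x.re + -2*u'*p.x.x.imK*c.y.x.imI + -2*u'*p.x.y.re*c.y.y.imJ + -2*u'*p.x.y.imI*c.y.y.imK + 2*u'*p.x.y.imJ*c.y.y.re + 2*u'*p.x.y.imK*c.y.y.imI + -2*v'*p.x.x.re*c.x.x.imJ + 2*v'*p.x.x.imI*c.x.x.imK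 + -2*v'*p.x.x.imJ*c.x.x.re + -2*v'*p.x.x.imK*c.x.x.imI + -2*v'*p.x.y.re*c.x.y.imJ + -2*v'*p.x.y.imI*c.x.y.imK + 2*v'*p.x.y.imJ*c.x.y.re + 2*v'*p.x.y.imK*c.x.y.imI + 2*t'*c.y.x.imJ)*hre1 + (-2*t'*c.x.x.imJ)*hre2 + ((-1)*u*c.x.x.imJ + v'*c.x.x.imJ)*hnn + (-2*v*c.x.x.imJ + -2*u'*c.x.x.imJ)*huv
  · linear_combination (norm := ring1) ((-1)*v*p.y.x.imK + v'*p.x.x.imK)*h0 + (v*p.y.x.imJ + (-1)*v'*p.x.x.imJ)*h1 + ((-1)*v*p.y.x.imI + v'*p.x.x.imI)*h2 + (t + v*p.y.x.re + v'*p.x.x.re)*h3 + (v*p.y.y.imK + (-1)*v'*p.x.y.imK)*h4 + ((-1)*v*p.y.y.imJ + v'*p.x.y.imJ)*h5 + (v*p.y.y.imI + (-1)*v'*p.x.y.imI)*h6 + ((-1)*v*p.y.y.re + v'*p.x.y.re)*h7 + ((-1)*u*p.y.x.imK + u'*p.x.x.imK)*h8 + (u*p.y.x.imJ + (-1)*u'*p.x.x.imJ)*h9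 + ((-1)*u*p.y.x.imI + u'*p.x.x.imI)*h10 + (u*p.y.x.re + -2*v*p.x.x.re + (-1)*u'*p.x.x.re + (-1)*t')*h11 + (u*p.y.y.imK + (-1)*u'*p.x.y.imK)*h12 + ((-1)*u*p.y.y.imJ + u'*p.x.y.imJ)*h13 + (u*p.y.y.imI + (-1)*u'*p.x.y.imI)*h14 + ((-1)*u*p.y.y.re + u'*p.x.y.re)*h15 + (2*u*p.x.x.re*c.x.x.imK + 2*u*p.x.x.imI*c.x.x.imJ + -2*u*p.x.x.imJ*c.x.x.imI + 2*u*p.x.x.imK*c.x.x.re + 2*u*p.x.y.re*c.x.y.imK + -2*u*p.x.y.imI*c.x.y.imJ + 2*u*p.x.y.imJ*c.x.y.imI + -2*u*p.x.y.imK*c.x.y.re + 2*v*p.x.x.re*c.y.x.imK + -2*v*p.x.x.imI*c.y.x.imJ + 2*v*p.x.x.imJ*c.y.x.imI + 2*v*p.x.x.imK*c.y.x.re + -2*v*p.x.y.re*c.y.y.imK + 2*v*p.x.y.imI*c.y.y.imJ + -2*v*p.x.y.imJ*c.y.y.imI + 2*v*p.x.y.imK*c.y.y.re + 4*v*p.y.x.imK*c.x.x.re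 + 2*u'*p.x.x.re*c.y.x.imK + -2*u'*p.x.x.imI*c.y.x.imJ + 2*u'*p.x.x.imJ*c.y.x.imI + -2*u'*p.x.x.imK*c.y.x.re + -2*u'*p.x.y.re*c.y.y.imK + 2*u'*p.x.y.imI*c.y.y.imJ + -2*u'*p.x.y.imJ*c.y.y.imI + 2*u'*p.x.y.imK*c.y.y.re + -2*v'*p.x.x.re*c.x.x.imK + -2*v'*p.x.x.imI*c.x.x.imJ + 2*v'*p.x.x.imJ*c.x.x.imI + -2*v'*p.x.x.imK*c.x.x.re + -2*v'*p.x.y.re*c.x.y.imK + 2*v'*p.x.y.imI*c.x.y.imJ + -2*v'*p.x.y.imJ*c.x.y.imI + 2*v'*p.x.y.imK*c.x.y.re + 2*t'*c.y.x.imK)*hre1 + (-2*t'*c.x.x.imK)*hre2 + ((-1)*u*c.x.x.imK + v'*c.x.x.imK)*hnn + (-2*v*c.x.x.imK + -2*u'*c.x.x.imK)*huv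
  · linear_combination (norm := ring1) ((-1)*v*p.y.y.re + v'*p.x.y.re)*h0 + ((-1)*v*p.y.y.imI + v'*p.x.y.imI)*h1 + ((-1)*v*p.y.y.imJ + v'*p.x.y.imJ)*h2 + ((-1)*v*p.y.y.imK + v'*p.x.y.imK)*h3 + (t + v*p.y.x.re + v'*p.x.x.re)*h4 + (v*p.y.x.imI + (-1)*v'*p.x.x.imI)*h5 + (v*p.y.x.imJ + (-1)*v'*p.x.x.imJ)*h6 + (v*p.y.x.imK + (-1)*v'*p.x.x.imK)*h7 + ((-1)*u*p.y.y.re + u'*p.x.y.re)*h8 + ((-1)*u*p.y.y.imI + u'*p.x.y.imI)*h9 + ((-1)*u*p.y.y.imJ + u'*p.x.y.imJ)*h10 + ((-1)*u*p.y.y.imK + u'*p.x.y.imK)*h11 + (u*p.y.x.re + -2*v*p.x.x.re + (-1)*u'*p.x.x.re + (-1)*t')*h12 + (u*p.y.x.imI + (-1)*u'*p.x.x.imI)*h13 + (u*p.y.x.imJ + (-1)*u'*p.x.x.imJ)*h14 + (u*p.y.x.imK + (-1)*u'*p.x.x.imK)*h15 + (2*u*p.x.x.re*c.x.y.re + -2*u*p.x.x.imI*c.x.y.imI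 + -2*u*p.x.x.imJ*c.x.y.imJ + -2*u*p.x.x.imK*c.x.y.imK + 2*u*p.x.y.re*c.x.x.re + 2*u*p.x.y.imI*c.x.x.imI + 2*u*p.x.y.imJ*c.x.x.imJ + 2*u*p.x.y.imK*c.x.x.imK + 2*v*p.x.x.re*c.y.y.re + 2*v*p.x.x.imI*c.y.y.imI + 2*v*p.x.x.imJ*c.y.y.imJ + 2*v*p.x.x.imK*c.y.y.imK + 2*v*p.x.y.re*c.y.x.re + -2*v*p.x.y.imI*c.y.x.imI + -2*v*p.x.y.imJ*c.y.x.imJ + -2*v*p.x.y.imK*c.y.x.imK + 4*v*p.y.y.re*c.x.x.re + 2*u'*p.x.x.re*c.y.y.re + 2*u'*p.x.x.imI*c.y.y.imI + 2*u'*p.x.x.imJ*c.y.y.imJ + 2*u'*p.x.x.imK*c.y.y.imK + -2*u'*p.x.y.re*c.y.x.re + -2*u'*p.x.y.imI*c.y.x.imI + -2*u'*p.x.y.imJ*c.y.x.imJ + -2*u'*p.x.y.imK*c.y.x.imK + -2*v'*p.x.x.re*c.x.y.re + 2*v'*p.x.x.imI*c.x.y.imI + 2*v'*p.x.x.imJ*c.x.y.imJ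 + 2*v'*p.x.x.imK*c.x.y.imK + -2*v'*p.x.y.re*c.x.x.re + -2*v'*p.x.y.imI*c.x.x.imI + -2*v'*p.x.y.imJ*c.x.x.imJ + -2*v'*p.x.y.imK*c.x.x.imK + 2*t'*c.y.y.re)*hre1 + (-2*t'*c.x.y.re)*hre2 + ((-1)*u*c.x.y.re + v'*c.x.y.re)*hnn + (-2*v*c.x.y.re + -2*u'*c.x.y.re)*huv
  · linear_combination (norm := ring1) ((-1)*v*p.y.y.imI + v'*p.x.y.imI)*h0 + (v*p.y.y.re + (-1)*v'*p.x.y.re)*h1 + ((-1)*v*p.y.y.imK + v'*p.x.y.imK)*h2 + (v*p.y.y.imJ + (-1)*v'*p.x.y.imJ)*h3 + ((-1)*v*p.y.x.imI + v'*p.x.x.imI)*h4 + (t + v*p.y.x.re + v'*p.x.x.re)*h5 + ((-1)*v*p.y.x.imK + v'*p.x.x.imK)*h6 + (v*p.y.x.imJ + (-1)*v'*p.x.x.imJ)*h7 + ((-1)*u*p.y.y.imI + u'*p.x.y.imI)*h8 + (u*p.y.y.re + (-1)*u'*p.x.y.re)*h9 + ((-1)*u*p.y.y.imK + u'*p.x.y.imK)*h10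 + (u*p.y.y.imJ + (-1)*u'*p.x.y.imJ)*h11 + ((-1)*u*p.y.x.imI + u'*p.x.x.imI)*h12 + (u*p.y.x.re + -2*v*p.x.x.re + (-1)*u'*p.x.x.re + (-1)*t')*h13 + ((-1)*u*p.y.x.imK + u'*p.x.x.imK)*h14 + (u*p.y.x.imJ + (-1)*u'*p.x.x.imJ)*h15 + (2*u*p.x.x.re*c.x.y.imI + 2*u*p.x.x.imI*c.x.y.re + -2*u*p.x.x.imJ*c.x.y.imK + 2*u*p.x.x.imK*c.x.y.imJ + -2*u*p.x.y.re*c.x.x.imI + 2*u*p.x.y.imI*c.x.x.re + -2*u*p.x.y.imJ*c.x.x.imK + 2*u*p.x.y.imK*c.x.x.imJ + 2*v*p.x.x.re*c.y.y.imI + -2*v*p.x.x.imI*c.y.y.re + 2*v*p.x.x.imJ*c.y.y.imK + -2*v*p.x.x.imK*c.y.y.imJ + 2*v*p.x.y.re*c.y.x.imI + 2*v*p.x.y.imI*c.y.x.re + 2*v*p.x.y.imJ*c.y.x.imK + -2*v*p.x.y.imK*c.y.x.imJ + 4*v*p.y.y.imI*c.x.x.re + 2*u'*p.x.x.re*c.y.y.imI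 + -2*u'*p.x.x.imI*c.y.y.re + 2*u'*p.x.x.imJ*c.y.y.imK + -2*u'*p.x.x.imK*c.y.y.imJ + 2*u'*p.x.y.re*c.y.x.imI + -2*u'*p.x.y.imI*c.y.x.re + 2*u'*p.x.y.imJ*c.y.x.imK + -2*u'*p.x.y.imK*c.y.x.imJ + -2*v'*p.x.x.re*c.x.y.imI + -2*v'*p.x.x.imI*c.x.y.re + 2*v'*p.x.x.imJ*c.x.y.imK + -2*v'*p.x.x.imK*c.x.y.imJ + 2*v'*p.x.y.re*c.x.x.imI + -2*v'*p.x.y.imI*c.x.x.re + 2*v'*p.x.y.imJ*c.x.x.imK + -2*v'*p.x.y.imK*c.x.x.imJ + 2*t'*c.y.y.imI)*hre1 + (-2*t'*c.x.y.imI)*hre2 + ((-1)*u*c.x.y.imI + v'*c.x.y.imI)*hnn + (-2*v*c.x.y.imI + -2*u'*c.x.y.imI)*huv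
  · linear_combination (norm := ring1) ((-1)*v*p.y.y.imJ + v'*p.x.y.imJ)*h0 + (v*p.y.y.imK + (-1)*v'*p.x.y.imK)*h1 + (v*p.y.y.re + (-1)*v'*p.x.y.re)*h2 + ((-1)*v*p.y.y.imI + v'*p.x.y.imI)*h3 + ((-1)*v*p.y.x.imJ + v'*p.x.x.imJ)*h4 + (v*p.y.x.imK + (-1)*v'*p.x.x.imK)*h5 + (t + v*p.y.x.re + v'*p.x.x.re)*h6 + ((-1)*v*p.y.x.imI + v'*p.x.x.imI)*h7 + ((-1)*u*p.y.y.imJ + u'*p.x.y.imJ)*h8 + (u*p.y.y.imK + (-1)*u'*p.x.y.imK)*h9 + (u*p.y.y.re + (-1)*u'*p.x.y.re)*h10 + ((-1)*u*p.y.y.imI + u'*p.x.y.imI)*h11 + ((-1)*u*p.y.x.imJ + u'*p.x.x.imJ)*h12 + (u*p.y.x.imK + (-1)*u'*p.x.x.imK)*h13 + (u*p.y.x.re + -2*v*p.x.x.re + (-1)*u'*p.x.x.re + (-1)*t')*h14 + ((-1)*u*p.y.x.imI + u'*p.x.x.imI)*h15 + (2*u*p.x.x.re*c.x.y.imJ +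 2*u*p.x.x.imI*c.x.y.imK + 2*u*p.x.x.imJ*c.x.y.re + -2*u*p.x.x.imK*c.x.y.imI + -2*u*p.x.y.re*c.x.x.imJ + 2*u*p.x.y.imI*c.x.x.imK + 2*u*p.x.y.imJ*c.x.x.re + -2*u*p.x.y.imK*c.x.x.imI + 2*v*p.x.x.re*c.y.y.imJ + -2*v*p.x.x.imI*c.y.y.imK + -2*v*p.x.x.imJ*c.y.y.re + 2*v*p.x.x.imK*c.y.y.imI + 2*v*p.x.y.re*c.y.x.imJ + -2*v*p.x.y.imI*c.y.x.imK + 2*v*p.x.y.imJ*c.y.x.re + 2*v*p.x.y.imK*c.y.x.imI + 4*v*p.y.y.imJ*c.x.x.re + 2*u'*p.x.x.re*c.y.y.imJ + -2*u'*p.x.x.imI*c.y.y.imK + -2*u'*p.x.x.imJ*c.y.y.re + 2*u'*p.x.x.imK*c.y.y.imI + 2*u'*p.x.y.re*c.y.x.imJ + -2*u'*p.x.y.imI*c.y.x.imK + -2*u'*p.x.y.imJ*c.y.x.re + 2*u'*p.x.y.imK*c.y.x.imI + -2*v'*p.x.x.re*c.x.y.imJ + -2*v'*p.x.x.imI*c.x.y.imK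 + -2*v'*p.x.x.imJ*c.x.y.re + 2*v'*p.x.x.imK*c.x.y.imI + 2*v'*p.x.y.re*c.x.x.imJ + -2*v'*p.x.y.imI*c.x.x.imK + -2*v'*p.x.y.imJ*c.x.x.re + 2*v'*p.x.y.imK*c.x.x.imI + 2*t'*c.y.y.imJ)*hre1 + (-2*t'*c.x.y.imJ)*hre2 + ((-1)*u*c.x.y.imJ + v'*c.x.y.imJ)*hnn + (-2*v*c.x.y.imJ + -2*u'*c.x.y.imJ)*huv
  · linear_combination (norm := ring1) ((-1)*v*p.y.y.imK + v'*p.x.y.imK)*h0 + ((-1)*v*p.y.y.imJ + v'*p.x.y.imJ)*h1 + (v*p.y.y.imI + (-1)*v'*p.x.y.imI)*h2 + (v*p.y.y.re + (-1)*v'*p.x.y.re)*h3 + ((-1)*v*p.y.x.imK + v'*p.x.x.imK)*h4 + ((-1)*v*p.y.x.imJ + v'*p.x.x.imJ)*h5 + (v*p.y.x.imI + (-1)*v'*p.x.x.imI)*h6 + (t + v*p.y.x.re + v'*p.x.x.re)*h7 + ((-1)*u*p.y.y.imK + u'*p.x.y.imK)*h8 + ((-1)*u*p.y.y.imJ + u'*p.x.y.imJ)*h9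 + (u*p.y.y.imI + (-1)*u'*p.x.y.imI)*h10 + (u*p.y.y.re + (-1)*u'*p.x.y.re)*h11 + ((-1)*u*p.y.x.imK + u'*p.x.x.imK)*h12 + ((-1)*u*p.y.x.imJ + u'*p.x.x.imJ)*h13 + (u*p.y.x.imI + (-1)*u'*p.x.x.imI)*h14 + (u*p.y.x.re + 2*v*p.x.x.re + (-1)*u'*p.x.x.re + (-1)*t')*h15 + (2*u*p.x.x.re*c.x.y.imK + -2*u*p.x.x.imI*c.x.y.imJ + 2*u*p.x.x.imJ*c.x.y.imI + 2*u*p.x.x.imK*c.x.y.re + -2*u*p.x.y.re*c.x.x.imK + -2*u*p.x.y.imI*c.x.x.imJ + 2*u*p.x.y.imJ*c.x.x.imI + 2*u*p.x.y.imK*c.x.x.re + -2*v*p.x.x.re*c.y.y.imK + -2*v*p.x.x.imI*c.y.y.imJ + 2*v*p.x.x.imJ*c.y.y.imI + 2*v*p.x.x.imK*c.y.y.re + -2*v*p.x.y.re*c.y.x.imK + -2*v*p.x.y.imI*c.y.x.imJ + 2*v*p.x.y.imJ*c.y.x.imI + -2*v*p.x.y.imK*c.y.x.re + 4*v*p.y.x.re*c.x.y.imK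 + -4*v*p.y.x.imI*c.x.y.imJ + 4*v*p.y.x.imJ*c.x.y.imI + 4*v*p.y.x.imK*c.x.y.re + -4*v*p.y.y.re*c.x.x.imK + -4*v*p.y.y.imI*c.x.x.imJ + 4*v*p.y.y.imJ*c.x.x.imI + 2*u'*p.x.x.re*c.y.y.imK + 2*u'*p.x.x.imI*c.y.y.imJ + -2*u'*p.x.x.imJ*c.y.y.imI + -2*u'*p.x.x.imK*c.y.y.re + 2*u'*p.x.y.re*c.y.x.imK + 2*u'*p.x.y.imI*c.y.x.imJ + -2*u'*p.x.y.imJ*c.y.x.imI + -2*u'*p.x.y.imK*c.y.x.re + -2*v'*p.x.x.re*c.x.y.imK + 2*v'*p.x.x.imI*c.x.y.imJ + -2*v'*p.x.x.imJ*c.x.y.imI + -2*v'*p.x.x.imK*c.x.y.re + 2*v'*p.x.y.re*c.x.x.imK + 2*v'*p.x.y.imI*c.x.x.imJ + -2*v'*p.x.y.imJ*c.x.x.imI + -2*v'*p.x.y.imK*c.x.x.re + 2*t'*c.y.y.imK)*hre1 + (-2*t'*c.x.y.imK)*hre2 + ((-1)*u*c.x.y.imK + v'*c.x.y.imK)*hnn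 + (-2*v*c.x.y.imK + -2*u'*c.x.y.imK)*huv
  · linear_combination (norm := ring1) (u*p.y.x.re + 2*v*p.x.x.re + (-1)*u'*p.x.x.re + (-1)*t')*h0 + (u*p.y.x.imI + (-1)*u'*p.x.x.imI)*h1 + (u*p.y.x.imJ + (-1)*u'*p.x.x.imJ)*h2 + (u*p.y.x.imK + (-1)*u'*p.x.x.imK)*h3 + (u*p.y.y.re + (-1)*u'*p.x.y.re)*h4 + (u*p.y.y.imI + (-1)*u'*p.x.y.imI)*h5 + (u*p.y.y.imJ + (-1)*u'*p.x.y.imJ)*h6 + (u*p.y.y.imK + (-1)*u'*p.x.y.imK)*h7 + (t + v*p.y.x.re + v'*p.x.x.re)*h8 + (v*p.y.x.imI + (-1)*v'*p.x.x.imI)*h9 + (v*p.y.x.imJ + (-1)*v'*p.x.x.imJ)*h10 + (v*p.y.x.imK + (-1)*v'*p.x.x.imK)*h11 + (v*p.y.y.re + (-1)*v'*p.x.y.re)*h12 + (v*p.y.y.imI + (-1)*v'*p.x.y.imI)*h13 + (v*p.y.y.imJ + (-1)*v'*p.x.y.imJ)*h14 + (v*p.y.y.imK + (-1)*v'*p.x.y.imK)*h15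 + (2*u*p.x.x.re*c.y.x.re + -2*u*p.x.x.imI*c.y.x.imI + -2*u*p.x.x.imJ*c.y.x.imJ + -2*u*p.x.x.imK*c.y.x.imK + -2*u*p.x.y.re*c.y.y.re + -2*u*p.x.y.imI*c.y.y.imI + -2*u*p.x.y.imJ*c.y.y.imJ + -2*u*p.x.y.imK*c.y.y.imK + -2*v*p.x.x.re*c.x.x.re + 2*v*p.x.x.imI*c.x.x.imI + 2*v*p.x.x.imJ*c.x.x.imJ + 2*v*p.x.x.imK*c.x.x.imK + 2*v*p.x.y.re*c.x.y.re + 2*v*p.x.y.imI*c.x.y.imI + 2*v*p.x.y.imJ*c.x.y.imJ + 2*v*p.x.y.imK*c.x.y.imK + 4*v*p.y.x.re*c.y.x.re + 2*u'*p.x.x.re*c.x.x.re + 2*u'*p.x.x.imI*c.x.x.imI + 2*u'*p.x.x.imJ*c.x.x.imJ + 2*u'*p.x.x.imK*c.x.x.imK + 2*u'*p.x.y.re*c.x.y.re + 2*u'*p.x.y.imI*c.x.y.imI + 2*u'*p.x.y.imJ*c.x.y.imJ + 2*u'*p.x.y.imK*c.x.y.imK + -2*v'*p.x.x.re*c.y.x.re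 + 2*v'*p.x.x.imI*c.y.x.imI + 2*v'*p.x.x.imJ*c.y.x.imJ + 2*v'*p.x.x.imK*c.y.x.imK + 2*v'*p.x.y.re*c.y.y.re + 2*v'*p.x.y.imI*c.y.y.imI + 2*v'*p.x.y.imJ*c.y.y.imJ + 2*v'*p.x.y.imK*c.y.y.imK + 2*t'*c.x.x.re)*hre1 + (-2*t'*c.y.x.re)*hre2 + ((-1)*u*c.y.x.re + v'*c.y.x.re)*hnn + (-2*v*c.y.x.re + -2*u'*c.y.x.re)*huv
  · linear_combination (norm := ring1) (u*p.y.x.imI + (-1)*u'*p.x.x.imI)*h0 + ((-1)*u*p.y.x.re + 2*v*p.x.x.re + u'*p.x.x.re + t')*h1 + (u*p.y.x.imK + (-1)*u'*p.x.x.imK)*h2 + ((-1)*u*p.y.x.imJ + u'*p.x.x.imJ)*h3 + (u*p.y.y.imI + (-1)*u'*p.x.y.imI)*h4 + ((-1)*u*p.y.y.re + u'*p.x.y.re)*h5 + ((-1)*u*p.y.y.imK + u'*p.x.y.imK)*h6 + (u*p.y.y.imJ + (-1)*u'*p.x.y.imJ)*h7 + ((-1)*v*p.y.x.imI + v'*p.x.x.imI)*h8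 + (t + v*p.y.x.re + v'*p.x.x.re)*h9 + ((-1)*v*p.y.x.imK + v'*p.x.x.imK)*h10 + (v*p.y.x.imJ + (-1)*v'*p.x.x.imJ)*h11 + ((-1)*v*p.y.y.imI + v'*p.x.y.imI)*h12 + (v*p.y.y.re + (-1)*v'*p.x.y.re)*h13 + (v*p.y.y.imK + (-1)*v'*p.x.y.imK)*h14 + ((-1)*v*p.y.y.imJ + v'*p.x.y.imJ)*h15 + (2*u*p.x.x.re*c.y.x.imI + 2*u*p.x.x.imI*c.y.x.re + -2*u*p.x.x.imJ*c.y.x.imK + 2*u*p.x.x.imK*c.y.x.imJ + -2*u*p.x.y.re*c.y.y.imI + 2*u*p.x.y.imI*c.y.y.re + 2*u*p.x.y.imJ*c.y.y.imK + -2*u*p.x.y.imK*c.y.y.imJ + -2*v*p.x.x.re*c.x.x.imI + -2*v*p.x.x.imI*c.x.x.re + -2*v*p.x.x.imJ*c.x.x.imK + 2*v*p.x.x.imK*c.x.x.imJ + -2*v*p.x.y.re*c.x.y.imI + 2*v*p.x.y.imI*c.x.y.re + 2*v*p.x.y.imJ*c.x.y.imK + -2*v*p.x.y.imK*c.x.y.imJ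 + 4*v*p.y.x.imI*c.y.x.re + -2*u'*p.x.x.re*c.x.x.imI + 2*u'*p.x.x.imI*c.x.x.re + -2*u'*p.x.x.imJ*c.x.x.imK + 2*u'*p.x.x.imK*c.x.x.imJ + -2*u'*p.x.y.re*c.x.y.imI + 2*u'*p.x.y.imI*c.x.y.re + 2*u'*p.x.y.imJ*c.x.y.imK + -2*u'*p.x.y.imK*c.x.y.imJ + -2*v'*p.x.x.re*c.y.x.imI + -2*v'*p.x.x.imI*c.y.x.re + 2*v'*p.x.x.imJ*c.y.x.imK + -2*v'*p.x.x.imK*c.y.x.imJ + 2*v'*p.x.y.re*c.y.y.imI + -2*v'*p.x.y.imI*c.y.y.re + -2*v'*p.x.y.imJ*c.y.y.imK + 2*v'*p.x.y.imK*c.y.y.imJ + -2*t'*c.x.x.imI)*hre1 + (-2*t'*c.y.x.imI)*hre2 + ((-1)*u*c.y.x.imI + v'*c.y.x.imI)*hnn + (-2*v*c.y.x.imI + -2*u'*c.y.x.imI)*huv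
  · linear_combination (norm := ring1) (u*p.y.x.imJ + (-1)*u'*p.x.x.imJ)*h0 + ((-1)*u*p.y.x.imK + u'*p.x.x.imK)*h1 + ((-1)*u*p.y.x.re + 2*v*p.x.x.re + u'*p.x.x.re + t')*h2 + (u*p.y.x.imI + (-1)*u'*p.x.x.imI)*h3 + (u*p.y.y.imJ + (-1)*u'*p.x.y.imJ)*h4 + (u*p.y.y.imK + (-1)*u'*p.x.y.imK)*h5 + ((-1)*u*p.y.y.re + u'*p.x.y.re)*h6 + ((-1)*u*p.y.y.imI + u'*p.x.y.imI)*h7 + ((-1)*v*p.y.x.imJ + v'*p.x.x.imJ)*h8 + (v*p.y.x.imK + (-1)*v'*p.x.x.imK)*h9 + (t + v*p.y.x.re + v'*p.x.x.re)*h10 + ((-1)*v*p.y.x.imI + v'*p.x.x.imI)*h11 + ((-1)*v*p.y.y.imJ + v'*p.x.y.imJ)*h12 + ((-1)*v*p.y.y.imK + v'*p.x.y.imK)*h13 + (v*p.y.y.re + (-1)*v'*p.x.y.re)*h14 + (v*p.y.y.imI + (-1)*v'*p.x.y.imI)*h15 + (2*u*p.x.x.re*c.y.x.imJ + 2*u*p.x.x.imI*c.y.x.imK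 + 2*u*p.x.x.imJ*c.y.x.re + -2*u*p.x.x.imK*c.y.x.imI + -2*u*p.x.y.re*c.y.y.imJ + -2*u*p.x.y.imI*c.y.y.imK + 2*u*p.x.y.imJ*c.y.y.re + 2*u*p.x.y.imK*c.y.y.imI + -2*v*p.x.x.re*c.x.x.imJ + 2*v*p.x.x.imI*c.x.x.imK + -2*v*p.x.x.imJ*c.x.x.re + -2*v*p.x.x.imK*c.x.x.imI + -2*v*p.x.y.re*c.x.y.imJ + -2*v*p.x.y.imI*c.x.y.imK + 2*v*p.x.y.imJ*c.x.y.re + 2*v*p.x.y.imK*c.x.y.imI + 4*v*p.y.x.imJ*c.y.x.re + -2*u'*p.x.x.re*c.x.x.imJ + 2*u'*p.x.x.imI*c.x.x.imK + 2*u'*p.x.x.imJ*c.x.x.re + -2*u'*p.x.x.imK*c.x.x.imI + -2*u'*p.x.y.re*c.x.y.imJ + -2*u'*p.x.y.imI*c.x.y.imK + 2*u'*p.x.y.imJ*c.x.y.re + 2*u'*p.x.y.imK*c.x.y.imI + -2*v'*p.x.x.re*c.y.x.imJ + -2*v'*p.x.x.imI*c.y.x.imK + -2*v'*p.x.x.imJ*c.y.x.re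 + 2*v'*p.x.x.imK*c.y.x.imI + 2*v'*p.x.y.re*c.y.y.imJ + 2*v'*p.x.y.imI*c.y.y.imK + -2*v'*p.x.y.imJ*c.y.y.re + -2*v'*p.x.y.imK*c.y.y.imI + -2*t'*c.x.x.imJ)*hre1 + (-2*t'*c.y.x.imJ)*hre2 + ((-1)*u*c.y.x.imJ + v'*c.y.x.imJ)*hnn + (-2*v*c.y.x.imJ + -2*u'*c.y.x.imJ)*huv
  · linear_combination (norm := ring1) (u*p.y.x.imK + (-1)*u'*p.x.x.imK)*h0 + (u*p.y.x.imJ + (-1)*u'*p.x.x.imJ)*h1 + ((-1)*u*p.y.x.imI + u'*p.x.x.imI)*h2 + ((-1)*u*p.y.x.re + 2*v*p.x.x.re + u'*p.x.x.re + t')*h3 + (u*p.y.y.imK + (-1)*u'*p.x.y.imK)*h4 + ((-1)*u*p.y.y.imJ + u'*p.x.y.imJ)*h5 + (u*p.y.y.imI + (-1)*u'*p.x.y.imI)*h6 + ((-1)*u*p.y.y.re + u'*p.x.y.re)*h7 + ((-1)*v*p.y.x.imK + v'*p.x.x.imK)*h8 + ((-1)*v*p.y.x.imJ + v'*p.x.x.imJ)*h9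 + (v*p.y.x.imI + (-1)*v'*p.x.x.imI)*h10 + (t + v*p.y.x.re + v'*p.x.x.re)*h11 + ((-1)*v*p.y.y.imK + v'*p.x.y.imK)*h12 + (v*p.y.y.imJ + (-1)*v'*p.x.y.imJ)*h13 + ((-1)*v*p.y.y.imI + v'*p.x.y.imI)*h14 + (v*p.y.y.re + (-1)*v'*p.x.y.re)*h15 + (2*u*p.x.x.re*c.y.x.imK + -2*u*p.x.x.imI*c.y.x.imJ + 2*u*p.x.x.imJ*c.y.x.imI + 2*u*p.x.x.imK*c.y.x.re + -2*u*p.x.y.re*c.y.y.imK + 2*u*p.x.y.imI*c.y.y.imJ + -2*u*p.x.y.imJ*c.y.y.imI + 2*u*p.x.y.imK*c.y.y.re + -2*v*p.x.x.re*c.x.x.imK + -2*v*p.x.x.imI*c.x.x.imJ + 2*v*p.x.x.imJ*c.x.x.imI + -2*v*p.x.x.imK*c.x.x.re + -2*v*p.x.y.re*c.x.y.imK + 2*v*p.x.y.imI*c.x.y.imJ + -2*v*p.x.y.imJ*c.x.y.imI + 2*v*p.x.y.imK*c.x.y.re + 4*v*p.y.x.imK*c.y.x.re + -2*u'*p.x.x.re*c.x.x.imK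 + -2*u'*p.x.x.imI*c.x.x.imJ + 2*u'*p.x.x.imJ*c.x.x.imI + 2*u'*p.x.x.imK*c.x.x.re + -2*u'*p.x.y.re*c.x.y.imK + 2*u'*p.x.y.imI*c.x.y.imJ + -2*u'*p.x.y.imJ*c.x.y.imI + 2*u'*p.x.y.imK*c.x.y.re + -2*v'*p.x.x.re*c.y.x.imK + 2*v'*p.x.x.imI*c.y.x.imJ + -2*v'*p.x.x.imJ*c.y.x.imI + -2*v'*p.x.x.imK*c.y.x.re + 2*v'*p.x.y.re*c.y.y.imK + -2*v'*p.x.y.imI*c.y.y.imJ + 2*v'*p.x.y.imJ*c.y.y.imI + -2*v'*p.x.y.imK*c.y.y.re + -2*t'*c.x.x.imK)*hre1 + (-2*t'*c.y.x.imK)*hre2 + ((-1)*u*c.y.x.imK + v'*c.y.x.imK)*hnn + (-2*v*c.y.x.imK + -2*u'*c.y.x.imK)*huv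
  · linear_combination (norm := ring1) (u*p.y.y.re + (-1)*u'*p.x.y.re)*h0 + ((-1)*u*p.y.y.imI + u'*p.x.y.imI)*h1 + ((-1)*u*p.y.y.imJ + u'*p.x.y.imJ)*h2 + ((-1)*u*p.y.y.imK + u'*p.x.y.imK)*h3 + ((-1)*u*p.y.x.re + 2*v*p.x.x.re + u'*p.x.x.re + t')*h4 + (u*p.y.x.imI + (-1)*u'*p.x.x.imI)*h5 + (u*p.y.x.imJ + (-1)*u'*p.x.x.imJ)*h6 + (u*p.y.x.imK + (-1)*u'*p.x.x.imK)*h7 + ((-1)*v*p.y.y.re + v'*p.x.y.re)*h8 + (v*p.y.y.imI + (-1)*v'*p.x.y.imI)*h9 + (v*p.y.y.imJ + (-1)*v'*p.x.y.imJ)*h10 + (v*p.y.y.imK + (-1)*v'*p.x.y.imK)*h11 + (t + v*p.y.x.re + v'*p.x.x.re)*h12 + ((-1)*v*p.y.x.imI + v'*p.x.x.imI)*h13 + ((-1)*v*p.y.x.imJ + v'*p.x.x.imJ)*h14 + ((-1)*v*p.y.x.imK + v'*p.x.x.imK)*h15 + (2*u*p.x.x.re*c.y.y.re + 2*u*p.x.x.imI*c.y.y.imI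 + 2*u*p.x.x.imJ*c.y.y.imJ + 2*u*p.x.x.imK*c.y.y.imK + 2*u*p.x.y.re*c.y.x.re + -2*u*p.x.y.imI*c.y.x.imI + -2*u*p.x.y.imJ*c.y.x.imJ + -2*u*p.x.y.imK*c.y.x.imK + -2*v*p.x.x.re*c.x.y.re + 2*v*p.x.x.imI*c.x.y.imI + 2*v*p.x.x.imJ*c.x.y.imJ + 2*v*p.x.x.imK*c.x.y.imK + -2*v*p.x.y.re*c.x.x.re + -2*v*p.x.y.imI*c.x.x.imI + -2*v*p.x.y.imJ*c.x.x.imJ + -2*v*p.x.y.imK*c.x.x.imK + 4*v*p.y.y.re*c.y.x.re + -2*u'*p.x.x.re*c.x.y.re + 2*u'*p.x.x.imI*c.x.y.imI + 2*u'*p.x.x.imJ*c.x.y.imJ + 2*u'*p.x.x.imK*c.x.y.imK + 2*u'*p.x.y.re*c.x.x.re + -2*u'*p.x.y.imI*c.x.x.imI + -2*u'*p.x.y.imJ*c.x.x.imJ + -2*u'*p.x.y.imK*c.x.x.imK + -2*v'*p.x.x.re*c.y.y.re + -2*v'*p.x.x.imI*c.y.y.imI + -2*v'*p.x.x.imJ*c.y.y.imJ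 + -2*v'*p.x.x.imK*c.y.y.imK + -2*v'*p.x.y.re*c.y.x.re + 2*v'*p.x.y.imI*c.y.x.imI + 2*v'*p.x.y.imJ*c.y.x.imJ + 2*v'*p.x.y.imK*c.y.x.imK + -2*t'*c.x.y.re)*hre1 + (-2*t'*c.y.y.re)*hre2 + ((-1)*u*c.y.y.re + v'*c.y.y.re)*hnn + (-2*v*c.y.y.re + -2*u'*c.y.y.re)*huv
  · linear_combination (norm := ring1) (u*p.y.y.imI + (-1)*u'*p.x.y.imI)*h0 + (u*p.y.y.re + (-1)*u'*p.x.y.re)*h1 + ((-1)*u*p.y.y.imK + u'*p.x.y.imK)*h2 + (u*p.y.y.imJ + (-1)*u'*p.x.y.imJ)*h3 + ((-1)*u*p.y.x.imI + u'*p.x.x.imI)*h4 + ((-1)*u*p.y.x.re + 2*v*p.x.x.re + u'*p.x.x.re + t')*h5 + ((-1)*u*p.y.x.imK + u'*p.x.x.imK)*h6 + (u*p.y.x.imJ + (-1)*u'*p.x.x.imJ)*h7 + ((-1)*v*p.y.y.imI + v'*p.x.y.imI)*h8 + ((-1)*v*p.y.y.re + v'*p.x.y.re)*h9 + (v*p.y.y.imK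 + (-1)*v'*p.x.y.imK)*h10 + ((-1)*v*p.y.y.imJ + v'*p.x.y.imJ)*h11 + (v*p.y.x.imI + (-1)*v'*p.x.x.imI)*h12 + (t + v*p.y.x.re + v'*p.x.x.re)*h13 + (v*p.y.x.imK + (-1)*v'*p.x.x.imK)*h14 + ((-1)*v*p.y.x.imJ + v'*p.x.x.imJ)*h15 + (2*u*p.x.x.re*c.y.y.imI + -2*u*p.x.x.imI*c.y.y.re + 2*u*p.x.x.imJ*c.y.y.imK + -2*u*p.x.x.imK*c.y.y.imJ + 2*u*p.x.y.re*c.y.x.imI + 2*u*p.x.y.imI*c.y.x.re + 2*u*p.x.y.imJ*c.y.x.imK + -2*u*p.x.y.imK*c.y.x.imJ + -2*v*p.x.x.re*c.x.y.imI + -2*v*p.x.x.imI*c.x.y.re + 2*v*p.x.x.imJ*c.x.y.imK + -2*v*p.x.x.imK*c.x.y.imJ + 2*v*p.x.y.re*c.x.x.imI + -2*v*p.x.y.imI*c.x.x.re + 2*v*p.x.y.imJ*c.x.x.imK + -2*v*p.x.y.imK*c.x.x.imJ + 4*v*p.y.y.imI*c.y.x.re + -2*u'*p.x.x.re*c.x.y.imI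 + -2*u'*p.x.x.imI*c.x.y.re + 2*u'*p.x.x.imJ*c.x.y.imK + -2*u'*p.x.x.imK*c.x.y.imJ + 2*u'*p.x.y.re*c.x.x.imI + 2*u'*p.x.y.imI*c.x.x.re + 2*u'*p.x.y.imJ*c.x.x.imK + -2*u'*p.x.y.imK*c.x.x.imJ + -2*v'*p.x.x.re*c.y.y.imI + 2*v'*p.x.x.imI*c.y.y.re + -2*v'*p.x.x.imJ*c.y.y.imK + 2*v'*p.x.x.imK*c.y.y.imJ + -2*v'*p.x.y.re*c.y.x.imI + -2*v'*p.x.y.imI*c.y.x.re + -2*v'*p.x.y.imJ*c.y.x.imK + 2*v'*p.x.y.imK*c.y.x.imJ + -2*t'*c.x.y.imI)*hre1 + (-2*t'*c.y.y.imI)*hre2 + ((-1)*u*c.y.y.imI + v'*c.y.y.imI)*hnn + (-2*v*c.y.y.imI + -2*u'*c.y.y.imI)*huv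
  · linear_combination (norm := ring1) (u*p.y.y.imJ + (-1)*u'*p.x.y.imJ)*h0 + (u*p.y.y.imK + (-1)*u'*p.x.y.imK)*h1 + (u*p.y.y.re + (-1)*u'*p.x.y.re)*h2 + ((-1)*u*p.y.y.imI + u'*p.x.y.imI)*h3 + ((-1)*u*p.y.x.imJ + u'*p.x.x.imJ)*h4 + (u*p.y.x.imK + (-1)*u'*p.x.x.imK)*h5 + ((-1)*u*p.y.x.re + 2*v*p.x.x.re + u'*p.x.x.re + t')*h6 + ((-1)*u*p.y.x.imI + u'*p.x.x.imI)*h7 + ((-1)*v*p.y.y.imJ + v'*p.x.y.imJ)*h8 + ((-1)*v*p.y.y.imK + v'*p.x.y.imK)*h9 + ((-1)*v*p.y.y.re + v'*p.x.y.re)*h10 + (v*p.y.y.imI + (-1)*v'*p.x.y.imI)*h11 + (v*p.y.x.imJ + (-1)*v'*p.x.x.imJ)*h12 + ((-1)*v*p.y.x.imK + v'*p.x.x.imK)*h13 + (t + v*p.y.x.re + v'*p.x.x.re)*h14 + (v*p.y.x.imI + (-1)*v'*p.x.x.imI)*h15 + (2*u*p.x.x.re*c.y.y.imJ + -2*u*p.x.x.imI*c.y.y.imK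 + -2*u*p.x.x.imJ*c.y.y.re + 2*u*p.x.x.imK*c.y.y.imI + 2*u*p.x.y.re*c.y.x.imJ + -2*u*p.x.y.imI*c.y.x.imK + 2*u*p.x.y.imJ*c.y.x.re + 2*u*p.x.y.imK*c.y.x.imI + -2*v*p.x.x.re*c.x.y.imJ + -2*v*p.x.x.imI*c.x.y.imK + -2*v*p.x.x.imJ*c.x.y.re + 2*v*p.x.x.imK*c.x.y.imI + 2*v*p.x.y.re*c.x.x.imJ + -2*v*p.x.y.imI*c.x.x.imK + -2*v*p.x.y.imJ*c.x.x.re + 2*v*p.x.y.imK*c.x.x.imI + 4*v*p.y.y.imJ*c.y.x.re + -2*u'*p.x.x.re*c.x.y.imJ + -2*u'*p.x.x.imI*c.x.y.imK + -2*u'*p.x.x.imJ*c.x.y.re + 2*u'*p.x.x.imK*c.x.y.imI + 2*u'*p.x.y.re*c.x.x.imJ + -2*u'*p.x.y.imI*c.x.x.imK + 2*u'*p.x.y.imJ*c.x.x.re + 2*u'*p.x.y.imK*c.x.x.imI + -2*v'*p.x.x.re*c.y.y.imJ + 2*v'*p.x.x.imI*c.y.y.imK + 2*v'*p.x.x.imJ*c.y.y.re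 + -2*v'*p.x.x.imK*c.y.y.imI + -2*v'*p.x.y.re*c.y.x.imJ + 2*v'*p.x.y.imI*c.y.x.imK + -2*v'*p.x.y.imJ*c.y.x.re + -2*v'*p.x.y.imK*c.y.x.imI + -2*t'*c.x.y.imJ)*hre1 + (-2*t'*c.y.y.imJ)*hre2 + ((-1)*u*c.y.y.imJ + v'*c.y.y.imJ)*hnn + (-2*v*c.y.y.imJ + -2*u'*c.y.y.imJ)*huv
  · linear_combination (norm := ring1) (u*p.y.y.imK + (-1)*u'*p.x.y.imK)*h0 + ((-1)*u*p.y.y.imJ + u'*p.x.y.imJ)*h1 + (u*p.y.y.imI + (-1)*u'*p.x.y.imI)*h2 + (u*p.y.y.re + (-1)*u'*p.x.y.re)*h3 + ((-1)*u*p.y.x.imK + u'*p.x.x.imK)*h4 + ((-1)*u*p.y.x.imJ + u'*p.x.x.imJ)*h5 + (u*p.y.x.imI + (-1)*u'*p.x.x.imI)*h6 + ((-1)*u*p.y.x.re + -2*v*p.x.x.re + u'*p.x.x.re + t')*h7 + ((-1)*v*p.y.y.imK + v'*p.x.y.imK)*h8 + (v*p.y.y.imJ + (-1)*v'*p.x.y.imJ)*h9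 + ((-1)*v*p.y.y.imI + v'*p.x.y.imI)*h10 + ((-1)*v*p.y.y.re + v'*p.x.y.re)*h11 + (v*p.y.x.imK + (-1)*v'*p.x.x.imK)*h12 + (v*p.y.x.imJ + (-1)*v'*p.x.x.imJ)*h13 + ((-1)*v*p.y.x.imI + v'*p.x.x.imI)*h14 + (t + v*p.y.x.re + v'*p.x.x.re)*h15 + (2*u*p.x.x.re*c.y.y.imK + 2*u*p.x.x.imI*c.y.y.imJ + -2*u*p.x.x.imJ*c.y.y.imI + -2*u*p.x.x.imK*c.y.y.re + 2*u*p.x.y.re*c.y.x.imK + 2*u*p.x.y.imI*c.y.x.imJ + -2*u*p.x.y.imJ*c.y.x.imI + 2*u*p.x.y.imK*c.y.x.re + 2*v*p.x.x.re*c.x.y.imK + -2*v*p.x.x.imI*c.x.y.imJ + 2*v*p.x.x.imJ*c.x.y.imI + 2*v*p.x.x.imK*c.x.y.re + -2*v*p.x.y.re*c.x.x.imK + -2*v*p.x.y.imI*c.x.x.imJ + 2*v*p.x.y.imJ*c.x.x.imI + 2*v*p.x.y.imK*c.x.x.re + 4*v*p.y.x.re*c.y.y.imK + 4*v*p.y.x.imI*c.y.y.imJ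 + -4*v*p.y.x.imJ*c.y.y.imI + -4*v*p.y.x.imK*c.y.y.re + 4*v*p.y.y.re*c.y.x.imK + 4*v*p.y.y.imI*c.y.x.imJ + -4*v*p.y.y.imJ*c.y.x.imI + -2*u'*p.x.x.re*c.x.y.imK + 2*u'*p.x.x.imI*c.x.y.imJ + -2*u'*p.x.x.imJ*c.x.y.imI + -2*u'*p.x.x.imK*c.x.y.re + 2*u'*p.x.y.re*c.x.x.imK + 2*u'*p.x.y.imI*c.x.x.imJ + -2*u'*p.x.y.imJ*c.x.x.imI + 2*u'*p.x.y.imK*c.x.x.re + -2*v'*p.x.x.re*c.y.y.imK + -2*v'*p.x.x.imI*c.y.y.imJ + 2*v'*p.x.x.imJ*c.y.y.imI + 2*v'*p.x.x.imK*c.y.y.re + -2*v'*p.x.y.re*c.y.x.imK + -2*v'*p.x.y.imI*c.y.x.imJ + 2*v'*p.x.y.imJ*c.y.x.imI + -2*v'*p.x.y.imK*c.y.x.re + -2*t'*c.x.y.imK)*hre1 + (-2*t'*c.y.y.imK)*hre2 + ((-1)*u*c.y.y.imK + v'*c.y.y.imK)*hnn + (-2*v*c.y.y.imK + -2*u'*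c.y.y.imK)*huv

set_option maxHeartbeats 1000000 in
private lemma sumsq_pos (b : Sed) (hb : b ≠ 0) : (0:ℝ) < b.x.x.re^2 + b.x.x.imI^2 + b.x.x.imJ^2 + b.x.x.imK^2 + b.x.y.re^2 + b.x.y.imI^2 + b.x.y.imJ^2 + b.x.y.imK^2 + b.y.x.re^2 + b.y.x.imI^2 + b.y.x.imJ^2 + b.y.x.imK^2 + b.y.y.re^2 + b.y.y.imI^2 + b.y.y.imJ^2 + b.y.y.imK^2 := by
  rcases lt_or_eq_of_le (show (0:ℝ) ≤ b.x.x.re^2 + b.x.x.imI^2 + b.x.x.imJ^2 + b.x.x.imK^2 + b.x.y.re^2 + b.x.y.imI^2 + b.x.y.imJ^2 + b.x.y.imK^2 + b.y.x.re^2 + b.y.x.imI^2 + b.y.x.imJ^2 + b.y.x.imK^2 + b.y.y.re^2 + b.y.y.imI^2 + b.y.y.imJ^2 + b.y.y.imK^2 by positivity) with h|h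
  · exact h
  · exfalso; apply hb
    have q0 : b.x.x.re = 0 := by
      have : b.x.x.re*b.x.x.re = 0 := le_antisymm (by linarith [sq_nonneg b.x.x.imI, sq_nonneg b.x.x.imJ, sq_nonneg b.x.x.imK, sq_nonneg b.x.y.re, sq_nonneg b.x.y.imI, sq_nonneg b.x.y.imJ, sq_nonneg b.x.y.imK, sq_nonneg b.y.x.re, sq_nonneg b.y.x.imI, sq_nonneg b.y.x.imJ, sq_nonneg b.y.x.imK, sq_nonneg b.y.y.re, sq_nonneg b.y.y.imI, sq_nonneg b.y.y.imJ, sq_nonneg b.y.y.imK]) (mul_self_nonneg _)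
      exact mul_self_eq_zero.mp this
    have q1 : b.x.x.imI = 0 := by
      have : b.x.x.imI*b.x.x.imI = 0 := le_antisymm (by linarith [sq_nonneg b.x.x.re, sq_nonneg b.x.x.imJ, sq_nonneg b.x.x.imK, sq_nonneg b.x.y.re, sq_nonneg b.x.y.imI, sq_nonneg b.x.y.imJ, sq_nonneg b.x.y.imK, sq_nonneg b.y.x.re, sq_nonneg b.y.x.imI, sq_nonneg b.y.x.imJ, sq_nonneg b.y.x.imK, sq_nonneg b.y.y.re, sq_nonneg b.y.y.imI, sq_nonneg b.y.y.imJ, sq_nonneg b.y.y.imK]) (mul_self_nonneg _)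
      exact mul_self_eq_zero.mp this
    have q2 : b.x.x.imJ = 0 := by
      have : b.x.x.imJ*b.x.x.imJ = 0 := le_antisymm (by linarith [sq_nonneg b.x.x.re, sq_nonneg b.x.x.imI, sq_nonneg b.x.x.imK, sq_nonneg b.x.y.re, sq_nonneg b.x.y.imI, sq_nonneg b.x.y.imJ, sq_nonneg b.x.y.imK, sq_nonneg b.y.x.re, sq_nonneg b.y.x.imI, sq_nonneg b.y.x.imJ, sq_nonneg b.y.x.imK, sq_nonneg b.y.y.re, sq_nonneg b.y.y.imI, sq_nonneg b.y.y.imJ, sq_nonneg b.y.y.imK]) (mul_self_nonneg _)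
      exact mul_self_eq_zero.mp this
    have q3 : b.x.x.imK = 0 := by
      have : b.x.x.imK*b.x.x.imK = 0 := le_antisymm (by linarith [sq_nonneg b.x.x.re, sq_nonneg b.x.x.imI, sq_nonneg b.x.x.imJ, sq_nonneg b.x.y.re, sq_nonneg b.x.y.imI, sq_nonneg b.x.y.imJ, sq_nonneg b.x.y.imK, sq_nonneg b.y.x.re, sq_nonneg b.y.x.imI, sq_nonneg b.y.x.imJ, sq_nonneg b.y.x.imK, sq_nonneg b.y.y.re, sq_nonneg b.y.y.imI, sq_nonneg b.y.y.imJ, sq_nonneg b.y.y.imK]) (mul_self_nonneg _)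
      exact mul_self_eq_zero.mp this
    have q4 : b.x.y.re = 0 := by
      have : b.x.y.re*b.x.y.re = 0 := le_antisymm (by linarith [sq_nonneg b.x.x.re, sq_nonneg b.x.x.imI, sq_nonneg b.x.x.imJ, sq_nonneg b.x.x.imK, sq_nonneg b.x.y.imI, sq_nonneg b.x.y.imJ, sq_nonneg b.x.y.imK, sq_nonneg b.y.x.re, sq_nonneg b.y.x.imI, sq_nonneg b.y.x.imJ, sq_nonneg b.y.x.imK, sq_nonneg b.y.y.re, sq_nonneg b.y.y.imI, sq_nonneg b.y.y.imJ, sq_nonneg b.y.y.imK]) (mul_self_nonneg _)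
      exact mul_self_eq_zero.mp this
    have q5 : b.x.y.imI = 0 := by
      have : b.x.y.imI*b.x.y.imI = 0 := le_antisymm (by linarith [sq_nonneg b.x.x.re, sq_nonneg b.x.x.imI, sq_nonneg b.x.x.imJ, sq_nonneg b.x.x.imK, sq_nonneg b.x.y.re, sq_nonneg b.x.y.imJ, sq_nonneg b.x.y.imK, sq_nonneg b.y.x.re, sq_nonneg b.y.x.imI, sq_nonneg b.y.x.imJ, sq_nonneg b.y.x.imK, sq_nonneg b.y.y.re, sq_nonneg b.y.y.imI, sq_nonneg b.y.y.imJ, sq_nonneg b.y.y.imK]) (mul_self_nonneg _)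
      exact mul_self_eq_zero.mp this
    have q6 : b.x.y.imJ = 0 := by
      have : b.x.y.imJ*b.x.y.imJ = 0 := le_antisymm (by linarith [sq_nonneg b.x.x.re, sq_nonneg b.x.x.imI, sq_nonneg b.x.x.imJ, sq_nonneg b.x.x.imK, sq_nonneg b.x.y.re, sq_nonneg b.x.y.imI, sq_nonneg b.x.y.imK, sq_nonneg b.y.x.re, sq_nonneg b.y.x.imI, sq_nonneg b.y.x.imJ, sq_nonneg b.y.x.imK, sq_nonneg b.y.y.re, sq_nonneg b.y.y.imI, sq_nonneg b.y.y.imJ, sq_nonneg b.y.y.imK]) (mul_self_nonneg _)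
      exact mul_self_eq_zero.mp this
    have q7 : b.x.y.imK = 0 := by
      have : b.x.y.imK*b.x.y.imK = 0 := le_antisymm (by linarith [sq_nonneg b.x.x.re, sq_nonneg b.x.x.imI, sq_nonneg b.x.x.imJ, sq_nonneg b.x.x.imK, sq_nonneg b.x.y.re, sq_nonneg b.x.y.imI, sq_nonneg b.x.y.imJ, sq_nonneg b.y.x.re, sq_nonneg b.y.x.imI, sq_nonneg b.y.x.imJ, sq_nonneg b.y.x.imK, sq_nonneg b.y.y.re, sq_nonneg b.y.y.imI, sq_nonneg b.y.y.imJ, sq_nonneg b.y.y.imK]) (mul_self_nonneg _)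
      exact mul_self_eq_zero.mp this
    have q8 : b.y.x.re = 0 := by
      have : b.y.x.re*b.y.x.re = 0 := le_antisymm (by linarith [sq_nonneg b.x.x.re, sq_nonneg b.x.x.imI, sq_nonneg b.x.x.imJ, sq_nonneg b.x.x.imK, sq_nonneg b.x.y.re, sq_nonneg b.x.y.imI, sq_nonneg b.x.y.imJ, sq_nonneg b.x.y.imK, sq_nonneg b.y.x.imI, sq_nonneg b.y.x.imJ, sq_nonneg b.y.x.imK, sq_nonneg b.y.y.re, sq_nonneg b.y.y.imI, sq_nonneg b.y.y.imJ, sq_nonneg b.y.y.imK]) (mul_self_nonneg _)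
      exact mul_self_eq_zero.mp this
    have q9 : b.y.x.imI = 0 := by
      have : b.y.x.imI*b.y.x.imI = 0 := le_antisymm (by linarith [sq_nonneg b.x.x.re, sq_nonneg b.x.x.imI, sq_nonneg b.x.x.imJ, sq_nonneg b.x.x.imK, sq_nonneg b.x.y.re, sq_nonneg b.x.y.imI, sq_nonneg b.x.y.imJ, sq_nonneg b.x.y.imK, sq_nonneg b.y.x.re, sq_nonneg b.y.x.imJ, sq_nonneg b.y.x.imK, sq_nonneg b.y.y.re, sq_nonneg b.y.y.imI, sq_nonneg b.y.y.imJ, sq_nonneg b.y.y.imK]) (mul_self_nonneg _)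
      exact mul_self_eq_zero.mp this
    have q10 : b.y.x.imJ = 0 := by
      have : b.y.x.imJ*b.y.x.imJ = 0 := le_antisymm (by linarith [sq_nonneg b.x.x.re, sq_nonneg b.x.x.imI, sq_nonneg b.x.x.imJ, sq_nonneg b.x.x.imK, sq_nonneg b.x.y.re, sq_nonneg b.x.y.imI, sq_nonneg b.x.y.imJ, sq_nonneg b.x.y.imK, sq_nonneg b.y.x.re, sq_nonneg b.y.x.imI, sq_nonneg b.y.x.imK, sq_nonneg b.y.y.re, sq_nonneg b.y.y.imI, sq_nonneg b.y.y.imJ, sq_nonneg b.y.y.imK]) (mul_self_nonneg _)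
      exact mul_self_eq_zero.mp this
    have q11 : b.y.x.imK = 0 := by
      have : b.y.x.imK*b.y.x.imK = 0 := le_antisymm (by linarith [sq_nonneg b.x.x.re, sq_nonneg b.x.x.imI, sq_nonneg b.x.x.imJ, sq_nonneg b.x.x.imK, sq_nonneg b.x.y.re, sq_nonneg b.x.y.imI, sq_nonneg b.x.y.imJ, sq_nonneg b.x.y.imK, sq_nonneg b.y.x.re, sq_nonneg b.y.x.imI, sq_nonneg b.y.x.imJ, sq_nonneg b.y.y.re, sq_nonneg b.y.y.imI, sq_nonneg b.y.y.imJ, sq_nonneg b.y.y.imK]) (mul_self_nonneg _)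
      exact mul_self_eq_zero.mp this
    have q12 : b.y.y.re = 0 := by
      have : b.y.y.re*b.y.y.re = 0 := le_antisymm (by linarith [sq_nonneg b.x.x.re, sq_nonneg b.x.x.imI, sq_nonneg b.x.x.imJ, sq_nonneg b.x.x.imK, sq_nonneg b.x.y.re, sq_nonneg b.x.y.imI, sq_nonneg b.x.y.imJ, sq_nonneg b.x.y.imK, sq_nonneg b.y.x.re, sq_nonneg b.y.x.imI, sq_nonneg b.y.x.imJ, sq_nonneg b.y.x.imK, sq_nonneg b.y.y.imI, sq_nonneg b.y.y.imJ, sq_nonneg b.y.y.imK]) (mul_self_nonneg _)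
      exact mul_self_eq_zero.mp this
    have q13 : b.y.y.imI = 0 := by
      have : b.y.y.imI*b.y.y.imI = 0 := le_antisymm (by linarith [sq_nonneg b.x.x.re, sq_nonneg b.x.x.imI, sq_nonneg b.x.x.imJ, sq_nonneg b.x.x.imK, sq_nonneg b.x.y.re, sq_nonneg b.x.y.imI, sq_nonneg b.x.y.imJ, sq_nonneg b.x.y.imK, sq_nonneg b.y.x.re, sq_nonneg b.y.x.imI, sq_nonneg b.y.x.imJ, sq_nonneg b.y.x.imK, sq_nonneg b.y.y.re, sq_nonneg b.y.y.imJ, sq_nonneg b.y.y.imK]) (mul_self_nonneg _)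
      exact mul_self_eq_zero.mp this
    have q14 : b.y.y.imJ = 0 := by
      have : b.y.y.imJ*b.y.y.imJ = 0 := le_antisymm (by linarith [sq_nonneg b.x.x.re, sq_nonneg b.x.x.imI, sq_nonneg b.x.x.imJ, sq_nonneg b.x.x.imK, sq_nonneg b.x.y.re, sq_nonneg b.x.y.imI, sq_nonneg b.x.y.imJ, sq_nonneg b.x.y.imK, sq_nonneg b.y.x.re, sq_nonneg b.y.x.imI, sq_nonneg b.y.x.imJ, sq_nonneg b.y.x.imK, sq_nonneg b.y.y.re, sq_nonneg b.y.y.imI, sq_nonneg b.y.y.imK]) (mul_self_nonneg _)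
      exact mul_self_eq_zero.mp this
    have q15 : b.y.y.imK = 0 := by
      have : b.y.y.imK*b.y.y.imK = 0 := le_antisymm (by linarith [sq_nonneg b.x.x.re, sq_nonneg b.x.x.imI, sq_nonneg b.x.x.imJ, sq_nonneg b.x.x.imK, sq_nonneg b.x.y.re, sq_nonneg b.x.y.imI, sq_nonneg b.x.y.imJ, sq_nonneg b.x.y.imK, sq_nonneg b.y.x.re, sq_nonneg b.y.x.imI, sq_nonneg b.y.x.imJ, sq_nonneg b.y.x.imK, sq_nonneg b.y.y.re, sq_nonneg b.y.y.imI, sq_nonneg b.y.y.imJ]) (mul_self_nonneg _)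
      exact mul_self_eq_zero.mp this
    ext <;> simp only [CD.zero_x, CD.zero_y, Quaternion.re_zero, Quaternion.imI_zero, Quaternion.imJ_zero, Quaternion.imK_zero] <;> assumption

set_option maxHeartbeats 4000000 in
theorem stmt15 (p : Sed) (hzd : IsZeroDivisor p) :
    ∀ a ∈ frakC p, ∀ c ∈ kerL p, a * c ∈ kerL p := by
  obtain ⟨hp, b, hb, hpb⟩ := hzd
  have g0 : (p*b).x.x.re = 0 := by rw [hpb]; rfl
  have g1 : (p*b).x.x.imI = 0 := by rw [hpb]; rfl
  have g2 : (p*b).x.x.imJ = 0 := by rw [hpb]; rfl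
  have g3 : (p*b).x.x.imK = 0 := by rw [hpb]; rfl
  have g4 : (p*b).x.y.re = 0 := by rw [hpb]; rfl
  have g5 : (p*b).x.y.imI = 0 := by rw [hpb]; rfl
  have g6 : (p*b).x.y.imJ = 0 := by rw [hpb]; rfl
  have g7 : (p*b).x.y.imK = 0 := by rw [hpb]; rfl
  have g8 : (p*b).y.x.re = 0 := by rw [hpb]; rfl
  have g9 : (p*b).y.x.imI = 0 := by rw [hpb]; rfl
  have g10 : (p*b).y.x.imJ = 0 := by rw [hpb]; rfl
  have g11 : (p*b).y.x.imK = 0 := by rw [hpb]; rfl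
  have g12 : (p*b).y.y.re = 0 := by rw [hpb]; rfl
  have g13 : (p*b).y.y.imI = 0 := by rw [hpb]; rfl
  have g14 : (p*b).y.y.imJ = 0 := by rw [hpb]; rfl
  have g15 : (p*b).y.y.imK = 0 := by rw [hpb]; rfl
  simp only [CD.mul_x, CD.mul_y, CD.add_x, CD.add_y, CD.sub_x, CD.sub_y, CD.neg_x, CD.neg_y,
    CD.smul_x, CD.smul_y, CD.star_x, CD.star_y, CD.zero_x, CD.zero_y, CD.one_x, CD.one_y,
    CD.mk_x, CD.mk_y,
    Quaternion.re_mul, Quaternion.imI_mul, Quaternion.imJ_mul, Quaternion.imK_mul,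
    Quaternion.re_add, Quaternion.imI_add, Quaternion.imJ_add, Quaternion.imK_add,
    Quaternion.re_sub, Quaternion.imI_sub, Quaternion.imJ_sub, Quaternion.imK_sub,
    Quaternion.re_neg, Quaternion.imI_neg, Quaternion.imJ_neg, Quaternion.imK_neg,
    Quaternion.re_smul, Quaternion.imI_smul, Quaternion.imJ_smul, Quaternion.imK_smul,
    Quaternion.re_star, Quaternion.imI_star, Quaternion.imJ_star, Quaternion.imK_star,
    Quaternion.re_one, Quaternion.imI_one, Quaternion.imJ_one, Quaternion.imK_one,
    Quaternion.re_zero, Quaternion.imI_zero, Quaternion.imJ_zero, Quaternion.imK_zero,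
    smul_eq_mul] at g0 g1 g2 g3 g4 g5 g6 g7 g8 g9 g10 g11 g12 g13 g14 g15
  have hS := sumsq_pos b hb
  have hre1 : p.x.x.re = 0 := by
    have h : p.x.x.re * (b.x.x.re^2 + b.x.x.imI^2 + b.x.x.imJ^2 + b.x.x.imK^2 + b.x.y.re^2 + b.x.y.imI^2 + b.x.y.imJ^2 + b.x.y.imK^2 + b.y.x.re^2 + b.y.x.imI^2 + b.y.x.imJ^2 + b.y.x.imK^2 + b.y.y.re^2 + b.y.y.imI^2 + b.y.y.imJ^2 + b.y.y.imK^2) = 0 := by linear_combination (norm := ring1) (b.x.x.re)*g0 + (b.x.x.imI)*g1 + (b.x.x.imJ)*g2 + (b.x.x.imK)*g3 + (b.x.y.re)*g4 + (b.x.y.imI)*g5 + (b.x.y.imJ)*g6 + (b.x.y.imK)*g7 + (b.y.x.re)*g8 + (b.y.x.imI)*g9 + (b.y.x.imJ)*g10 + (b.y.x.imK)*g11 + (b.y.y.re)*g12 + (b.y.y.imI)*g13 + (b.y.y.imJ)*g14 + (b.y.y.imK)*g15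
    rcases mul_eq_zero.mp h with h'|h'
    · exact h'
    · exact absurd h' (ne_of_gt hS)
  have hre2 : p.y.x.re = 0 := by
    have h : p.y.x.re * (b.x.x.re^2 + b.x.x.imI^2 + b.x.x.imJ^2 + b.x.x.imK^2 + b.x.y.re^2 + b.x.y.imI^2 + b.x.y.imJ^2 + b.x.y.imK^2 + b.y.x.re^2 + b.y.x.imI^2 + b.y.x.imJ^2 + b.y.x.imK^2 + b.y.y.re^2 + b.y.y.imI^2 + b.y.y.imJ^2 + b.y.y.imK^2) = 0 := by linear_combination (norm := ring1) ((-1)*b.y.x.re)*g0 + (b.y.x.imI)*g1 + (b.y.x.imJ)*g2 + (b.y.x.imK)*g3 + (b.y.y.re)*g4 + (b.y.y.imI)*g5 + (b.y.y.imJ)*g6 + (b.y.y.imK)*g7 + (b.x.x.re)*g8 + ((-1)*b.x.x.imI)*g9 + ((-1)*b.x.x.imJ)*g10 + ((-1)*b.x.x.imK)*g11 + ((-1)*b.x.y.re)*g12 + ((-1)*b.x.y.imI)*g13 + ((-1)*b.x.y.imJ)*g14 + ((-1)*b.x.y.imK)*g15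
    rcases mul_eq_zero.mp h with h'|h'
    · exact h'
    · exact absurd h' (ne_of_gt hS)
  have hnn : p.x.x.re*p.x.x.re + p.x.x.imI*p.x.x.imI + p.x.x.imJ*p.x.x.imJ + p.x.x.imK*p.x.x.imK + p.x.y.re*p.x.y.re + p.x.y.imI*p.x.y.imI + p.x.y.imJ*p.x.y.imJ + p.x.y.imK*p.x.y.imK = p.y.x.re*p.y.x.re + p.y.x.imI*p.y.x.imI + p.y.x.imJ*p.y.x.imJ + p.y.x.imK*p.y.x.imK + p.y.y.re*p.y.y.re + p.y.y.imI*p.y.y.imI + p.y.y.imJ*p.y.y.imJ + p.y.y.imK*p.y.y.imK := by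
    have h : ((p.x.x.re*p.x.x.re + p.x.x.imI*p.x.x.imI + p.x.x.imJ*p.x.x.imJ + p.x.x.imK*p.x.x.imK + p.x.y.re*p.x.y.re + p.x.y.imI*p.x.y.imI + p.x.y.imJ*p.x.y.imJ + p.x.y.imK*p.x.y.imK) - (p.y.x.re*p.y.x.re + p.y.x.imI*p.y.x.imI + p.y.x.imJ*p.y.x.imJ + p.y.x.imK*p.y.x.imK + p.y.y.re*p.y.y.re + p.y.y.imI*p.y.y.imI + p.y.y.imJ*p.y.y.imJ + p.y.y.imK*p.y.y.imK)) * (b.x.x.re^2 + b.x.x.imI^2 + b.x.x.imJ^2 + b.x.x.imK^2 + b.x.y.re^2 + b.x.y.imI^2 + b.x.y.imJ^2 + b.x.y.imK^2 + b.y.x.re^2 + b.y.x.imI^2 + b.y.x.imJ^2 + b.y.x.imK^2 + b.y.y.re^2 + b.y.y.imI^2 + b.y.y.imJ^2 + b.y.y.imK^2) = 0 := by linear_combination (norm := ring1) (p.x.x.re*b.x.x.re + (-1)*p.x.x.imI*b.x.x.imI + (-1)*p.x.x.imJ*b.x.x.imJ + (-1)*p.x.x.imK*b.x.x.imK + (-1)*p.x.y.re*b.x.y.re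 + (-1)*p.x.y.imI*b.x.y.imI + (-1)*p.x.y.imJ*b.x.y.imJ + (-1)*p.x.y.imK*b.x.y.imK + p.y.x.re*b.y.x.re + p.y.x.imI*b.y.x.imI + p.y.x.imJ*b.y.x.imJ + p.y.x.imK*b.y.x.imK + p.y.y.re*b.y.y.re + p.y.y.imI*b.y.y.imI + p.y.y.imJ*b.y.y.imJ + p.y.y.imK*b.y.y.imK)*g0 + (p.x.x.re*b.x.x.imI + p.x.x.imI*b.x.x.re + p.x.x.imJ*b.x.x.imK + (-1)*p.x.x.imK*b.x.x.imJ + p.x.y.re*b.x.y.imI + (-1)*p.x.y.imI*b.x.y.re + (-1)*p.x.y.imJ*b.x.y.imK + p.x.y.imK*b.x.y.imJ + (-1)*p.y.x.re*b.y.x.imI + p.y.x.imI*b.y.x.re + p.y.x.imJ*b.y.x.imK + (-1)*p.y.x.imK*b.y.x.imJ + p.y.y.re*b.y.y.imI + (-1)*p.y.y.imI*b.y.y.re + (-1)*p.y.y.imJ*b.y.y.imK + p.y.y.imK*b.y.y.imJ)*g1 + (p.x.x.re*b.x.x.imJ + (-1)*p.x.x.imI*b.x.x.imK + p.x.x.imJ*b.x.x.re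 + p.x.x.imK*b.x.x.imI + p.x.y.re*b.x.y.imJ + p.x.y.imI*b.x.y.imK + (-1)*p.x.y.imJ*b.x.y.re + (-1)*p.x.y.imK*b.x.y.imI + (-1)*p.y.x.re*b.y.x.imJ + (-1)*p.y.x.imI*b.y.x.imK + p.y.x.imJ*b.y.x.re + p.y.x.imK*b.y.x.imI + p.y.y.re*b.y.y.imJ + p.y.y.imI*b.y.y.imK + (-1)*p.y.y.imJ*b.y.y.re + (-1)*p.y.y.imK*b.y.y.imI)*g2 + (p.x.x.re*b.x.x.imK + p.x.x.imI*b.x.x.imJ + (-1)*p.x.x.imJ*b.x.x.imI + p.x.x.imK*b.x.x.re + p.x.y.re*b.x.y.imK + (-1)*p.x.y.imI*b.x.y.imJ + p.x.y.imJ*b.x.y.imI + (-1)*p.x.y.imK*b.x.y.re + (-1)*p.y.x.re*b.y.x.imK + p.y.x.imI*b.y.x.imJ + (-1)*p.y.x.imJ*b.y.x.imI + p.y.x.imK*b.y.x.re + p.y.y.re*b.y.y.imK + (-1)*p.y.y.imI*b.y.y.imJ + p.y.y.imJ*b.y.y.imI + (-1)*p.y.y.imK*b.y.y.re)*g3 +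 (p.x.x.re*b.x.y.re + (-1)*p.x.x.imI*b.x.y.imI + (-1)*p.x.x.imJ*b.x.y.imJ + (-1)*p.x.x.imK*b.x.y.imK + p.x.y.re*b.x.x.re + p.x.y.imI*b.x.x.imI + p.x.y.imJ*b.x.x.imJ + p.x.y.imK*b.x.x.imK + (-1)*p.y.x.re*b.y.y.re + (-1)*p.y.x.imI*b.y.y.imI + (-1)*p.y.x.imJ*b.y.y.imJ + (-1)*p.y.x.imK*b.y.y.imK + p.y.y.re*b.y.x.re + p.y.y.imI*b.y.x.imI + p.y.y.imJ*b.y.x.imJ + p.y.y.imK*b.y.x.imK)*g4 + (p.x.x.re*b.x.y.imI + p.x.x.imI*b.x.y.re + (-1)*p.x.x.imJ*b.x.y.imK + p.x.x.imK*b.x.y.imJ + (-1)*p.x.y.re*b.x.x.imI + p.x.y.imI*b.x.x.re + (-1)*p.x.y.imJ*b.x.x.imK + p.x.y.imK*b.x.x.imJ + (-1)*p.y.x.re*b.y.y.imI + p.y.x.imI*b.y.y.re + (-1)*p.y.x.imJ*b.y.y.imK + p.y.x.imK*b.y.y.imJ + (-1)*p.y.y.re*b.y.x.imI + p.y.y.imI*b.y.x.re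 + (-1)*p.y.y.imJ*b.y.x.imK + p.y.y.imK*b.y.x.imJ)*g5 + (p.x.x.re*b.x.y.imJ + p.x.x.imI*b.x.y.imK + p.x.x.imJ*b.x.y.re + (-1)*p.x.x.imK*b.x.y.imI + (-1)*p.x.y.re*b.x.x.imJ + p.x.y.imI*b.x.x.imK + p.x.y.imJ*b.x.x.re + (-1)*p.x.y.imK*b.x.x.imI + (-1)*p.y.x.re*b.y.y.imJ + p.y.x.imI*b.y.y.imK + p.y.x.imJ*b.y.y.re + (-1)*p.y.x.imK*b.y.y.imI + (-1)*p.y.y.re*b.y.x.imJ + p.y.y.imI*b.y.x.imK + p.y.y.imJ*b.y.x.re + (-1)*p.y.y.imK*b.y.x.imI)*g6 + (p.x.x.re*b.x.y.imK + (-1)*p.x.x.imI*b.x.y.imJ + p.x.x.imJ*b.x.y.imI + p.x.x.imK*b.x.y.re + (-1)*p.x.y.re*b.x.x.imK + (-1)*p.x.y.imI*b.x.x.imJ + p.x.y.imJ*b.x.x.imI + p.x.y.imK*b.x.x.re + (-1)*p.y.x.re*b.y.y.imK + (-1)*p.y.x.imI*b.y.y.imJ + p.y.x.imJ*b.y.y.imI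 + p.y.x.imK*b.y.y.re + (-1)*p.y.y.re*b.y.x.imK + (-1)*p.y.y.imI*b.y.x.imJ + p.y.y.imJ*b.y.x.imI + p.y.y.imK*b.y.x.re)*g7 + (p.x.x.re*b.y.x.re + (-1)*p.x.x.imI*b.y.x.imI + (-1)*p.x.x.imJ*b.y.x.imJ + (-1)*p.x.x.imK*b.y.x.imK + (-1)*p.x.y.re*b.y.y.re + (-1)*p.x.y.imI*b.y.y.imI + (-1)*p.x.y.imJ*b.y.y.imJ + (-1)*p.x.y.imK*b.y.y.imK + (-1)*p.y.x.re*b.x.x.re + (-1)*p.y.x.imI*b.x.x.imI + (-1)*p.y.x.imJ*b.x.x.imJ + (-1)*p.y.x.imK*b.x.x.imK + (-1)*p.y.y.re*b.x.y.re + (-1)*p.y.y.imI*b.x.y.imI + (-1)*p.y.y.imJ*b.x.y.imJ + (-1)*p.y.y.imK*b.x.y.imK)*g8 + (p.x.x.re*b.y.x.imI + p.x.x.imI*b.y.x.re + (-1)*p.x.x.imJ*b.y.x.imK + p.x.x.imK*b.y.x.imJ + (-1)*p.x.y.re*b.y.y.imI + p.x.y.imI*b.y.y.re + p.x.y.imJ*b.y.y.imK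 + (-1)*p.x.y.imK*b.y.y.imJ + p.y.x.re*b.x.x.imI + (-1)*p.y.x.imI*b.x.x.re + p.y.x.imJ*b.x.x.imK + (-1)*p.y.x.imK*b.x.x.imJ + p.y.y.re*b.x.y.imI + (-1)*p.y.y.imI*b.x.y.re + (-1)*p.y.y.imJ*b.x.y.imK + p.y.y.imK*b.x.y.imJ)*g9 + (p.x.x.re*b.y.x.imJ + p.x.x.imI*b.y.x.imK + p.x.x.imJ*b.y.x.re + (-1)*p.x.x.imK*b.y.x.imI + (-1)*p.x.y.re*b.y.y.imJ + (-1)*p.x.y.imI*b.y.y.imK + p.x.y.imJ*b.y.y.re + p.x.y.imK*b.y.y.imI + p.y.x.re*b.x.x.imJ + (-1)*p.y.x.imI*b.x.x.imK + (-1)*p.y.x.imJ*b.x.x.re + p.y.x.imK*b.x.x.imI + p.y.y.re*b.x.y.imJ + p.y.y.imI*b.x.y.imK + (-1)*p.y.y.imJ*b.x.y.re + (-1)*p.y.y.imK*b.x.y.imI)*g10 + (p.x.x.re*b.y.x.imK + (-1)*p.x.x.imI*b.y.x.imJ + p.x.x.imJ*b.y.x.imI + p.x.x.imK*b.y.x.re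 + (-1)*p.x.y.re*b.y.y.imK + p.x.y.imI*b.y.y.imJ + (-1)*p.x.y.imJ*b.y.y.imI + p.x.y.imK*b.y.y.re + p.y.x.re*b.x.x.imK + p.y.x.imI*b.x.x.imJ + (-1)*p.y.x.imJ*b.x.x.imI + (-1)*p.y.x.imK*b.x.x.re + p.y.y.re*b.x.y.imK + (-1)*p.y.y.imI*b.x.y.imJ + p.y.y.imJ*b.x.y.imI + (-1)*p.y.y.imK*b.x.y.re)*g11 + (p.x.x.re*b.y.y.re + p.x.x.imI*b.y.y.imI + p.x.x.imJ*b.y.y.imJ + p.x.x.imK*b.y.y.imK + p.x.y.re*b.y.x.re + (-1)*p.x.y.imI*b.y.x.imI + (-1)*p.x.y.imJ*b.y.x.imJ + (-1)*p.x.y.imK*b.y.x.imK + p.y.x.re*b.x.y.re + (-1)*p.y.x.imI*b.x.y.imI + (-1)*p.y.x.imJ*b.x.y.imJ + (-1)*p.y.x.imK*b.x.y.imK + (-1)*p.y.y.re*b.x.x.re + p.y.y.imI*b.x.x.imI + p.y.y.imJ*b.x.x.imJ + p.y.y.imK*b.x.x.imK)*g12 + (p.x.x.re*b.y.y.imI +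 (-1)*p.x.x.imI*b.y.y.re + p.x.x.imJ*b.y.y.imK + (-1)*p.x.x.imK*b.y.y.imJ + p.x.y.re*b.y.x.imI + p.x.y.imI*b.y.x.re + p.x.y.imJ*b.y.x.imK + (-1)*p.x.y.imK*b.y.x.imJ + p.y.x.re*b.x.y.imI + p.y.x.imI*b.x.y.re + (-1)*p.y.x.imJ*b.x.y.imK + p.y.x.imK*b.x.y.imJ + (-1)*p.y.y.re*b.x.x.imI + (-1)*p.y.y.imI*b.x.x.re + (-1)*p.y.y.imJ*b.x.x.imK + p.y.y.imK*b.x.x.imJ)*g13 + (p.x.x.re*b.y.y.imJ + (-1)*p.x.x.imI*b.y.y.imK + (-1)*p.x.x.imJ*b.y.y.re + p.x.x.imK*b.y.y.imI + p.x.y.re*b.y.x.imJ + (-1)*p.x.y.imI*b.y.x.imK + p.x.y.imJ*b.y.x.re + p.x.y.imK*b.y.x.imI + p.y.x.re*b.x.y.imJ + p.y.x.imI*b.x.y.imK + p.y.x.imJ*b.x.y.re + (-1)*p.y.x.imK*b.x.y.imI + (-1)*p.y.y.re*b.x.x.imJ + p.y.y.imI*b.x.x.imK + (-1)*p.y.y.imJ*b.x.x.re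 + (-1)*p.y.y.imK*b.x.x.imI)*g14 + (p.x.x.re*b.y.y.imK + p.x.x.imI*b.y.y.imJ + (-1)*p.x.x.imJ*b.y.y.imI + (-1)*p.x.x.imK*b.y.y.re + p.x.y.re*b.y.x.imK + p.x.y.imI*b.y.x.imJ + (-1)*p.x.y.imJ*b.y.x.imI + p.x.y.imK*b.y.x.re + p.y.x.re*b.x.y.imK + (-1)*p.y.x.imI*b.x.y.imJ + p.y.x.imJ*b.x.y.imI + p.y.x.imK*b.x.y.re + (-1)*p.y.y.re*b.x.x.imK + (-1)*p.y.y.imI*b.x.x.imJ + p.y.y.imJ*b.x.x.imI + (-1)*p.y.y.imK*b.x.x.re)*g15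
    rcases mul_eq_zero.mp h with h'|h'
    · linarith
    · exact absurd h' (ne_of_gt hS)
  have huv : p.x.x.re*p.y.x.re + p.x.x.imI*p.y.x.imI + p.x.x.imJ*p.y.x.imJ + p.x.x.imK*p.y.x.imK + p.x.y.re*p.y.y.re + p.x.y.imI*p.y.y.imI + p.x.y.imJ*p.y.y.imJ + p.x.y.imK*p.y.y.imK = 0 := by
    have h : (p.x.x.re*p.y.x.re + p.x.x.imI*p.y.x.imI + p.x.x.imJ*p.y.x.imJ + p.x.x.imK*p.y.x.imK + p.x.y.re*p.y.y.re + p.x.y.imI*p.y.y.imI + p.x.y.imJ*p.y.y.imJ + p.x.y.imK*p.y.y.imK) * (b.x.x.re^2 + b.x.x.imI^2 + b.x.x.imJ^2 + b.x.x.imK^2 + b.x.y.re^2 + b.x.y.imI^2 + b.x.y.imJ^2 + b.x.y.imK^2 + b.y.x.re^2 + b.y.x.imI^2 + b.y.x.imJ^2 + b.y.x.imK^2 + b.y.y.re^2 + b.y.y.imI^2 + b.y.y.imJ^2 + b.y.y.imK^2) = 0 := by linear_combination (norm := ring1) ((-1)*p.x.x.re*b.y.x.re + (-1)*p.x.x.imI*b.y.x.imI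 + (-1)*p.x.x.imJ*b.y.x.imJ + (-1)*p.x.x.imK*b.y.x.imK + (-1)*p.x.y.re*b.y.y.re + (-1)*p.x.y.imI*b.y.y.imI + (-1)*p.x.y.imJ*b.y.y.imJ + (-1)*p.x.y.imK*b.y.y.imK)*g0 + (p.x.x.re*b.y.x.imI + (-1)*p.x.x.imI*b.y.x.re + (-1)*p.x.x.imJ*b.y.x.imK + p.x.x.imK*b.y.x.imJ + (-1)*p.x.y.re*b.y.y.imI + p.x.y.imI*b.y.y.re + p.x.y.imJ*b.y.y.imK + (-1)*p.x.y.imK*b.y.y.imJ)*g1 + (p.x.x.re*b.y.x.imJ + p.x.x.imI*b.y.x.imK + (-1)*p.x.x.imJ*b.y.x.re + (-1)*p.x.x.imK*b.y.x.imI + (-1)*p.x.y.re*b.y.y.imJ + (-1)*p.x.y.imI*b.y.y.imK + p.x.y.imJ*b.y.y.re + p.x.y.imK*b.y.y.imI)*g2 + (p.x.x.re*b.y.x.imK + (-1)*p.x.x.imI*b.y.x.imJ + p.x.x.imJ*b.y.x.imI + (-1)*p.x.x.imK*b.y.x.re + (-1)*p.x.y.re*b.y.y.imK + p.x.y.imI*b.y.y.imJ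 + (-1)*p.x.y.imJ*b.y.y.imI + p.x.y.imK*b.y.y.re)*g3 + (p.x.x.re*b.y.y.re + p.x.x.imI*b.y.y.imI + p.x.x.imJ*b.y.y.imJ + p.x.x.imK*b.y.y.imK + (-1)*p.x.y.re*b.y.x.re + (-1)*p.x.y.imI*b.y.x.imI + (-1)*p.x.y.imJ*b.y.x.imJ + (-1)*p.x.y.imK*b.y.x.imK)*g4 + (p.x.x.re*b.y.y.imI + (-1)*p.x.x.imI*b.y.y.re + p.x.x.imJ*b.y.y.imK + (-1)*p.x.x.imK*b.y.y.imJ + p.x.y.re*b.y.x.imI + (-1)*p.x.y.imI*b.y.x.re + p.x.y.imJ*b.y.x.imK + (-1)*p.x.y.imK*b.y.x.imJ)*g5 + (p.x.x.re*b.y.y.imJ + (-1)*p.x.x.imI*b.y.y.imK + (-1)*p.x.x.imJ*b.y.y.re + p.x.x.imK*b.y.y.imI + p.x.y.re*b.y.x.imJ + (-1)*p.x.y.imI*b.y.x.imK + (-1)*p.x.y.imJ*b.y.x.re + p.x.y.imK*b.y.x.imI)*g6 + (p.x.x.re*b.y.y.imK + p.x.x.imI*b.y.y.imJ + (-1)*p.x.x.imJ*b.y.y.imI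 + (-1)*p.x.x.imK*b.y.y.re + p.x.y.re*b.y.x.imK + p.x.y.imI*b.y.x.imJ + (-1)*p.x.y.imJ*b.y.x.imI + (-1)*p.x.y.imK*b.y.x.re)*g7 + (p.x.x.re*b.x.x.re + p.x.x.imI*b.x.x.imI + p.x.x.imJ*b.x.x.imJ + p.x.x.imK*b.x.x.imK + p.x.y.re*b.x.y.re + p.x.y.imI*b.x.y.imI + p.x.y.imJ*b.x.y.imJ + p.x.y.imK*b.x.y.imK)*g8 + ((-1)*p.x.x.re*b.x.x.imI + p.x.x.imI*b.x.x.re + (-1)*p.x.x.imJ*b.x.x.imK + p.x.x.imK*b.x.x.imJ + (-1)*p.x.y.re*b.x.y.imI + p.x.y.imI*b.x.y.re + p.x.y.imJ*b.x.y.imK + (-1)*p.x.y.imK*b.x.y.imJ)*g9 + ((-1)*p.x.x.re*b.x.x.imJ + p.x.x.imI*b.x.x.imK + p.x.x.imJ*b.x.x.re + (-1)*p.x.x.imK*b.x.x.imI + (-1)*p.x.y.re*b.x.y.imJ + (-1)*p.x.y.imI*b.x.y.imK + p.x.y.imJ*b.x.y.re + p.x.y.imK*b.x.y.imI)*g10 +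 ((-1)*p.x.x.re*b.x.x.imK + (-1)*p.x.x.imI*b.x.x.imJ + p.x.x.imJ*b.x.x.imI + p.x.x.imK*b.x.x.re + (-1)*p.x.y.re*b.x.y.imK + p.x.y.imI*b.x.y.imJ + (-1)*p.x.y.imJ*b.x.y.imI + p.x.y.imK*b.x.y.re)*g11 + ((-1)*p.x.x.re*b.x.y.re + p.x.x.imI*b.x.y.imI + p.x.x.imJ*b.x.y.imJ + p.x.x.imK*b.x.y.imK + p.x.y.re*b.x.x.re + (-1)*p.x.y.imI*b.x.x.imI + (-1)*p.x.y.imJ*b.x.x.imJ + (-1)*p.x.y.imK*b.x.x.imK)*g12 + ((-1)*p.x.x.re*b.x.y.imI + (-1)*p.x.x.imI*b.x.y.re + p.x.x.imJ*b.x.y.imK + (-1)*p.x.x.imK*b.x.y.imJ + p.x.y.re*b.x.x.imI + p.x.y.imI*b.x.x.re + p.x.y.imJ*b.x.x.imK + (-1)*p.x.y.imK*b.x.x.imJ)*g13 + ((-1)*p.x.x.re*b.x.y.imJ + (-1)*p.x.x.imI*b.x.y.imK + (-1)*p.x.x.imJ*b.x.y.re + p.x.x.imK*b.x.y.imI + p.x.y.re*b.x.x.imJ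 + (-1)*p.x.y.imI*b.x.x.imK + p.x.y.imJ*b.x.x.re + p.x.y.imK*b.x.x.imI)*g14 + ((-1)*p.x.x.re*b.x.y.imK + p.x.x.imI*b.x.y.imJ + (-1)*p.x.x.imJ*b.x.y.imI + (-1)*p.x.x.imK*b.x.y.re + p.x.y.re*b.x.x.imK + p.x.y.imI*b.x.x.imJ + (-1)*p.x.y.imJ*b.x.x.imI + p.x.y.imK*b.x.x.re)*g15
    rcases mul_eq_zero.mp h with h'|h'
    · exact h'
    · exact absurd h' (ne_of_gt hS)
  rintro a ⟨t, u, v, t', u', v', rfl⟩ c hc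
  exact stmt15key p c t u v t' u' v' hc hre1 hre2 hnn huv

end Sedenion
end
end
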